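/- arXiv:1005.1151 — 4 statements merged into one kernel-verified Lean document; each statement's English description precedes it below -/
import Mathlib

section
/- Let K ⊆ ℝ^k be a nontrivial pointed closed convex cone, L ∈ ℝ^{k×n}, A ∈ ℝ^{m×n}, and U ∈ ℝ^{k×m}. Then (L − UA)(ℝ^n_+) ∩ (−K) = {0} if and only if there exists λ ∈ K*⁰ such that (L − UA)ᵀλ ∈ ℝ^n_+. -/
/-!
If `(L - UA)ᵀ λ ≥ 0`, then `λ ⬝ᵥ w ≥ 0` on the cone `C = (L - UA)(ℝⁿ₊)`, while `λ ⬝ᵥ w < 0` on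
`-K \ {0}`; so `C ∩ -K = {0}`.

Conversely, `C` is closed: by the conic Carathéodory theorem it is the finite union of the cones
spanned by linearly independent sets of columns, each the image of an orthant under an injective
linear map. The set `T = conv (K ∩ S)`, with `S` the unit sphere, is compact, lies in `K` and
misses `0` because `K` is pointed. Since `C ∩ -K = {0}`, the set `-T` misses `C`, and separating
the compact convex set `-T` from the closed cone `C` gives a functional `λ` that is nonnegative on
`C` and positive on `T`, hence on `K \ {0}`.
-/

open Set Finset Matrix Module

section ConicCaratheodory

variable {ι E : Type*} [AddCommGroup E] [Module ℝ E] {v : ι → E}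

theorem exists_nonneg_sum_erase_eq_of_sum_eq_zero [DecidableEq ι] {s : Finset ι} {g : ι → ℝ}
    (hg : ∑ i ∈ s, g i • v i = 0) (hpos : ∃ i ∈ s, 0 < g i) {c : ι → ℝ}
    (hc : ∀ i ∈ s, 0 ≤ c i) :
    ∃ j ∈ s, ∃ d : ι → ℝ, (∀ i ∈ s, 0 ≤ d i) ∧
      ∑ i ∈ s.erase j, d i • v i = ∑ i ∈ s, c i • v i := by
  -- ratio test: `j` minimizes `c i / g i` over `g i > 0`, so `c - (c j / g j) • g` stays
  -- nonnegative on `s` and vanishes at `j`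
  obtain ⟨j, hj, hjmin⟩ := {i ∈ s | 0 < g i}.exists_min_image (fun i => c i / g i)
    (by simpa [Finset.Nonempty] using hpos)
  rw [Finset.mem_filter] at hj
  set t := c j / g j
  refine ⟨j, hj.1, fun i => c i - t * g i, fun i hi => ?_, ?_⟩
  · rcases le_or_gt (g i) 0 with hgi | hgi
    · nlinarith [hc i hi, div_nonneg (hc j hj.1) hj.2.le]
    · have := (le_div_iff₀ hgi).1 (hjmin i (Finset.mem_filter.2 ⟨hi, hgi⟩))
      linarith
  · rw [Finset.sum_erase s (by simp [t, div_mul_cancel₀ _ hj.2.ne'])]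
    simp [sub_smul, Finset.sum_sub_distrib, mul_smul, ← Finset.smul_sum, hg]

theorem exists_nonneg_sum_erase_eq_of_not_linearIndepOn [DecidableEq ι] {s : Finset ι}
    (hs : ¬LinearIndepOn ℝ v s) {c : ι → ℝ} (hc : ∀ i ∈ s, 0 ≤ c i) :
    ∃ j ∈ s, ∃ d : ι → ℝ, (∀ i ∈ s, 0 ≤ d i) ∧
      ∑ i ∈ s.erase j, d i • v i = ∑ i ∈ s, c i • v i := by
  obtain ⟨g, hg, i, hi, hgi⟩ := not_linearIndepOn_finset_iff.1 hs
  rcases hgi.lt_or_gt with hneg | hpos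
  · exact exists_nonneg_sum_erase_eq_of_sum_eq_zero (g := -g) (by simp [neg_smul, hg])
      ⟨i, hi, by simpa⟩ hc
  · exact exists_nonneg_sum_erase_eq_of_sum_eq_zero hg ⟨i, hi, hpos⟩ hc

theorem exists_linearIndepOn_nonneg_sum_eq (s : Finset ι) {c : ι → ℝ} (hc : ∀ i ∈ s, 0 ≤ c i) :
    ∃ t ⊆ s, LinearIndepOn ℝ v t ∧ ∃ d : ι → ℝ, (∀ i ∈ t, 0 ≤ d i) ∧
      ∑ i ∈ t, d i • v i = ∑ i ∈ s, c i • v i := by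
  classical
  induction s using Finset.strongInduction generalizing c with
  | H s ih =>
    by_cases hs : LinearIndepOn ℝ v s
    · exact ⟨s, subset_rfl, hs, c, hc, rfl⟩
    obtain ⟨j, hj, d, hd, hsum⟩ := exists_nonneg_sum_erase_eq_of_not_linearIndepOn hs hc
    obtain ⟨t, hts, ht, e, he, hesum⟩ :=
      ih _ (s.erase_ssubset hj) fun i hi => hd i (Finset.mem_of_mem_erase hi)
    exact ⟨t, hts.trans (s.erase_subset j), ht, e, he, hesum.trans hsum⟩

end ConicCaratheodory

section ClosedCone

variable {ι E : Type*} [AddCommGroup E] [Module ℝ E] [TopologicalSpace E]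
  [IsTopologicalAddGroup E] [ContinuousSMul ℝ E] [T2Space E] {v : ι → E}

theorem LinearIndepOn.isClosed_setOf_nonneg_sum {t : Finset ι} (ht : LinearIndepOn ℝ v t) :
    IsClosed {x | ∃ d : ι → ℝ, (∀ i ∈ t, 0 ≤ d i) ∧ ∑ i ∈ t, d i • v i = x} := by
  have himage : {x | ∃ d : ι → ℝ, (∀ i ∈ t, 0 ≤ d i) ∧ ∑ i ∈ t, d i • v i = x} =
      Fintype.linearCombination ℝ (fun i : t => v i) '' Ici 0 := by
    ext x
    constructor
    · rintro ⟨d, hd, rfl⟩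
      exact ⟨fun i => d i, fun i => hd i i.2, by
        simpa [Fintype.linearCombination_apply] using Finset.sum_attach t fun i => d i • v i⟩
    · classical
      rintro ⟨d, hd, rfl⟩
      refine ⟨fun i => if h : i ∈ t then d ⟨i, h⟩ else 0,
        fun i hi => by simpa [hi] using hd ⟨i, hi⟩, ?_⟩
      rw [← Finset.sum_coe_sort t]
      simp [Fintype.linearCombination_apply]
  rw [himage]
  exact (LinearMap.isClosedEmbedding_of_injective (LinearMap.ker_eq_bot.2
    ht.linearIndependent.fintypeLinearCombination_injective)).isClosedMap _ isClosed_Ici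

theorem isClosed_setOf_nonneg_sum [Fintype ι] (v : ι → E) :
    IsClosed {x | ∃ c : ι → ℝ, (∀ i, 0 ≤ c i) ∧ ∑ i, c i • v i = x} := by
  classical
  have hunion : {x | ∃ c : ι → ℝ, (∀ i, 0 ≤ c i) ∧ ∑ i, c i • v i = x} =
      ⋃ t : {t : Finset ι // LinearIndepOn ℝ v t},
        {x | ∃ d : ι → ℝ, (∀ i ∈ (t : Finset ι), 0 ≤ d i) ∧ ∑ i ∈ t, d i • v i = x} := by
    ext x
    simp only [mem_iUnion]
    constructor
    · rintro ⟨c, hc, rfl⟩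
      obtain ⟨t, -, ht, d, hd, hsum⟩ :=
        exists_linearIndepOn_nonneg_sum_eq (v := v) univ fun i _ => hc i
      exact ⟨⟨t, ht⟩, d, hd, hsum⟩
    · rintro ⟨t, d, hd, rfl⟩
      refine ⟨fun i => if i ∈ (t : Finset ι) then d i else 0, fun i => ?_, ?_⟩
      · dsimp only
        split_ifs with h
        exacts [hd i h, le_rfl]
      · simp [ite_smul, Finset.sum_ite_mem]
  rw [hunion]
  exact isClosed_iUnion_of_finite fun t => t.2.isClosed_setOf_nonneg_sum

end ClosedCone

theorem convexHull_eq_image_stdSimplex_pi {E : Type*} [AddCommGroup E] [Module ℝ E]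
    [FiniteDimensional ℝ E] {s : Set E} (hs : s.Nonempty) :
    convexHull ℝ s = (fun p : (Fin (finrank ℝ E + 1) → ℝ) × (Fin (finrank ℝ E + 1) → E) =>
      ∑ i, p.1 i • p.2 i) '' (stdSimplex ℝ _ ×ˢ univ.pi fun _ => s) := by
  obtain ⟨s₀, hs₀⟩ := hs
  refine Subset.antisymm (fun x hx => ?_) ?_
  · obtain ⟨ι, _, z, w, hzs, hz, hw0, hw1, rfl⟩ := eq_pos_convex_span_of_mem_convexHull hx
    have hcard : Fintype.card ι ≤ finrank ℝ E + 1 :=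
      hz.card_le_finrank_succ.trans (Nat.succ_le_succ (Submodule.finrank_le _))
    -- pad the Carathéodory combination with the point `s₀` at weight `0`
    set e : ι ↪ Fin (finrank ℝ E + 1) :=
      (Fintype.equivFin ι).toEmbedding.trans (Fin.castLEEmb hcard)
    refine ⟨(Function.extend e w fun _ => 0, Function.extend e z fun _ => s₀),
      ⟨⟨fun i => ?_, ?_⟩, fun i _ => ?_⟩, ?_⟩ <;> dsimp only
    · by_cases hi : ∃ j, e j = i
      · obtain ⟨j, rfl⟩ := hi
        exact (e.injective.extend_apply _ _ _).symm ▸ (hw0 j).le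
      · exact (Function.extend_apply' _ _ _ hi).symm ▸ le_rfl
    · rw [← hw1]
      refine (Fintype.sum_of_injective e e.injective _ _ (fun i hi => ?_) fun j => ?_).symm
      · exact Function.extend_apply' _ _ _ (by simpa using hi)
      · exact (e.injective.extend_apply _ _ _).symm
    · by_cases hi : ∃ j, e j = i
      · obtain ⟨j, rfl⟩ := hi
        exact (e.injective.extend_apply _ _ _).symm ▸ hzs (mem_range_self j)
      · exact (Function.extend_apply' _ _ _ hi).symm ▸ hs₀
    · refine (Fintype.sum_of_injective e e.injective _ _ (fun i hi => ?_) fun j => ?_).symm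
      · simp [Function.extend_apply' _ _ _ (by simpa using hi : ¬∃ j, e j = i)]
      · simp [e.injective.extend_apply]
  · rintro _ ⟨p, ⟨⟨hw0, hw1⟩, hz⟩, rfl⟩
    exact (convex_convexHull ℝ s).sum_mem (fun i _ => hw0 i) hw1
      fun i _ => subset_convexHull ℝ s (hz i (mem_univ i))

theorem IsCompact.convexHull {E : Type*} [AddCommGroup E] [Module ℝ E] [TopologicalSpace E]
    [ContinuousAdd E] [ContinuousSMul ℝ E] [FiniteDimensional ℝ E] {s : Set E}
    (hs : IsCompact s) : IsCompact (convexHull ℝ s) := by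
  rcases s.eq_empty_or_nonempty with rfl | hne
  · simp
  rw [convexHull_eq_image_stdSimplex_pi hne]
  exact ((isCompact_stdSimplex _ _).prod (isCompact_univ_pi fun _ => hs)).image (by fun_prop)

theorem PointedCone.zero_notMem_convexHull {E : Type*} [AddCommGroup E] [Module ℝ E]
    {K : PointedCone ℝ E} (hK : (K : Set E) ∩ -K = {0}) {s : Set E} (hsK : s ⊆ K)
    (hs : (0 : E) ∉ s) : (0 : E) ∉ convexHull ℝ s := by
  classical
  intro h0
  obtain ⟨ι, _, z, w, hzs, -, hw0, hw1, hsum⟩ := eq_pos_convex_span_of_mem_convexHull h0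
  obtain ⟨j⟩ : Nonempty ι := by
    by_contra hι
    simp [not_nonempty_iff.1 hι] at hw1
  have hzK : ∀ i, w i • z i ∈ K := fun i => K.smul_mem (hw0 i).le (hsK (hzs (mem_range_self i)))
  have hneg : -(w j • z j) = ∑ i ∈ univ.erase j, w i • z i := by
    rw [neg_eq_iff_add_eq_zero, Finset.add_sum_erase univ (fun i => w i • z i) (mem_univ j), hsum]
  have hzero : w j • z j = 0 := by
    rw [← mem_singleton_iff, ← hK]
    refine ⟨hzK j, ?_⟩
    rw [Set.mem_neg, hneg]
    exact K.sum_mem fun i _ => hzK i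
  rw [smul_eq_zero] at hzero
  exact hzero.elim (hw0 j).ne' fun hz => hs (hz ▸ hzs (mem_range_self j))

def ProperCone.ofConvex {E : Type*} [AddCommGroup E] [Module ℝ E] [TopologicalSpace E]
    (s : Set E) (hs0 : (0 : E) ∈ s) (hsmul : ∀ c : ℝ, 0 ≤ c → ∀ x ∈ s, c • x ∈ s)
    (hconv : Convex ℝ s) (hclosed : IsClosed s) : ProperCone ℝ E where
  carrier := s
  zero_mem' := hs0
  add_mem' {x y} hx hy := by
    simpa [smul_add, smul_smul] using
      hsmul 2 zero_le_two _ (hconv hx hy (by norm_num) (by norm_num) (add_halves 1))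
  smul_mem' c x hx := hsmul c c.2 x hx
  isClosed' := hclosed

def Matrix.mulVecNonnegCone {m n : Type*} [Fintype n] (B : Matrix m n ℝ) : ProperCone ℝ (m → ℝ) :=
  .ofConvex {w | ∃ x : n → ℝ, (∀ i, 0 ≤ x i) ∧ B *ᵥ x = w} ⟨0, fun _ => le_rfl, mulVec_zero B⟩
    (by
      rintro c hc _ ⟨x, hx, rfl⟩
      exact ⟨c • x, fun i => mul_nonneg hc (hx i), mulVec_smul B c x⟩)
    ((convex_Ici 0).linear_image B.mulVecLin)
    (by simpa [mulVec_eq_sum, op_smul_eq_smul] using isClosed_setOf_nonneg_sum Bᵀ)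

theorem ProperCone.exists_strongDual_nonneg_pos {F : Type*} [NormedAddCommGroup F]
    [NormedSpace ℝ F] [FiniteDimensional ℝ F] (C K : ProperCone ℝ F)
    (hK : (K : Set F) ∩ -K = {0}) (hCK : (C : Set F) ∩ -K = {0}) :
    ∃ f : StrongDual ℝ F, (∀ x ∈ C, 0 ≤ f x) ∧ ∀ u ∈ K, u ≠ 0 → 0 < f u := by
  set T := convexHull ℝ ((K : Set F) ∩ Metric.sphere 0 1)
  have hTK : T ⊆ K := convexHull_min inter_subset_left K.convex
  have hT0 : (0 : F) ∉ T :=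
    PointedCone.zero_notMem_convexHull (K := K) hK inter_subset_left fun h => by simpa using h.2
  have hdisj : Disjoint (-T) C := by
    refine disjoint_left.2 fun x hxT hxC => hT0 ?_
    have hx0 : x ∈ (C : Set F) ∩ -K := ⟨hxC, hTK hxT⟩
    rw [hCK, mem_singleton_iff] at hx0
    simpa [hx0] using hxT
  obtain ⟨f, hfC, hfT⟩ := C.hyperplane_separation (convex_convexHull ℝ _).neg
    ((isCompact_sphere 0 1).inter_left K.isClosed).convexHull.neg hdisj
  refine ⟨f, hfC, fun u hu hu0 => ?_⟩
  have hunit : ‖u‖⁻¹ • u ∈ T := subset_convexHull ℝ _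
    ⟨K.smul_mem hu (by positivity), by simp [norm_smul, norm_ne_zero_iff.2 hu0]⟩
  have hneg := hfT _ (neg_mem_neg.2 hunit)
  rw [map_neg, map_smul, smul_eq_mul, neg_lt_zero] at hneg
  exact pos_of_mul_pos_right hneg (by positivity)

theorem StrongDual.exists_dotProduct_eq {ι : Type*} [Fintype ι] (f : StrongDual ℝ (ι → ℝ)) :
    ∃ l : ι → ℝ, ∀ x, f x = l ⬝ᵥ x := by
  classical
  refine ⟨fun i => f fun j => if i = j then 1 else 0, fun x => ?_⟩
  simpa [dotProduct, mul_comm] using LinearMap.pi_apply_eq_sum_univ (f : (ι → ℝ) →ₗ[ℝ] ℝ) x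

theorem stmt2_general (k n m : ℕ) (K : Set (Fin k → ℝ))
    (hKcone : ∀ (c : ℝ), 0 ≤ c → ∀ x ∈ K, c • x ∈ K)
    (hKclosed : IsClosed K) (hKconvex : Convex ℝ K)
    (hKpointed : K ∩ (-K) = {0})
    (L : Matrix (Fin k) (Fin n) ℝ) (A : Matrix (Fin m) (Fin n) ℝ)
    (U : Matrix (Fin k) (Fin m) ℝ) :
    ({w : Fin k → ℝ | ∃ x : Fin n → ℝ, (∀ i, 0 ≤ x i) ∧ (L - U * A) *ᵥ x = w} ∩ (-K) = {0})
    ↔ ∃ l : Fin k → ℝ, (∀ u ∈ K, u ≠ 0 → 0 < l ⬝ᵥ u) ∧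
        ∀ i, 0 ≤ ((L - U * A)ᵀ *ᵥ l) i := by
  set B := L - U * A
  have hK0 : (0 : Fin k → ℝ) ∈ K := (hKpointed.ge (mem_singleton 0)).1
  constructor
  · intro hCK
    obtain ⟨f, hfC, hfK⟩ := ProperCone.exists_strongDual_nonneg_pos B.mulVecNonnegCone
      (.ofConvex K hK0 hKcone hKconvex hKclosed) hKpointed hCK
    obtain ⟨l, hl⟩ := f.exists_dotProduct_eq
    refine ⟨l, fun u hu hu0 => hl u ▸ hfK u hu hu0, fun i => ?_⟩
    classical
    have hcol := hfC _ ⟨Pi.single i 1, fun j => by by_cases h : j = i <;> simp [h], rfl⟩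
    rwa [hl, dotProduct_mulVec, ← mulVec_transpose, dotProduct_single, mul_one] at hcol
  · rintro ⟨l, hlK, hlB⟩
    refine eq_singleton_iff_unique_mem.2
      ⟨⟨⟨0, fun _ => le_rfl, mulVec_zero B⟩, by simpa using hK0⟩, ?_⟩
    rintro _ ⟨⟨x, hx, rfl⟩, hxK⟩
    by_contra hne
    have hnonneg : 0 ≤ l ⬝ᵥ (B *ᵥ x) := by
      rw [dotProduct_mulVec, ← mulVec_transpose]
      exact dotProduct_nonneg_of_nonneg (fun i => hlB i) hx
    have hpos := hlK _ hxK (neg_ne_zero.2 hne)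
    rw [dotProduct_neg] at hpos
    linarith

theorem stmt2 (k n m : ℕ) (K : Set (Fin k → ℝ))
    (hKcone : ∀ (c : ℝ), 0 ≤ c → ∀ x ∈ K, c • x ∈ K)
    (hKclosed : IsClosed K) (hKconvex : Convex ℝ K)
    (hKpointed : K ∩ (-K) = {0})
    (hKne : K ≠ {0}) (hKuniv : K ≠ Set.univ)
    (L : Matrix (Fin k) (Fin n) ℝ) (A : Matrix (Fin m) (Fin n) ℝ)
    (U : Matrix (Fin k) (Fin m) ℝ) :
    ({w : Fin k → ℝ | ∃ x : Fin n → ℝ, (∀ i, 0 ≤ x i) ∧ (L - U * A) *ᵥ x = w} ∩ (-K) = {0})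
    ↔ ∃ l : Fin k → ℝ, (∀ u ∈ K, u ≠ 0 → 0 < l ⬝ᵥ u) ∧
        ∀ i, 0 ≤ ((L - U * A)ᵀ *ᵥ l) i :=
  stmt2_general k n m K hKcone hKclosed hKconvex hKpointed L A U
end

section
/- The set of minimal elements of L(𝒜) with respect to K equals the set of maximal elements of h(ℬ) with respect to K, where 𝒜 = {x ∈ ℝ^n_+ : Ax = b}, ℬ = {(λ, U, v) ∈ K*⁰ × ℝ^{k×m} × ℝ^k : λᵀv = 0, (L − UA)ᵀλ ∈ ℝ^n_+} and h(λ, U, v) = Ub + v. -/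
/-!
Weak duality, `b ⬝ᵥ μ ≤ l ⬝ᵥ L x` for dual-feasible `(l, μ)` and feasible `x`, shows that no point
of `h(ℬ)` strictly dominates (with respect to `K`) a point of `L(𝒜)`, nor conversely; this gives
the minimality and maximality halves of both inclusions.

Membership comes from a strict separation of a finitely generated cone, which is closed by conic
Carathéodory, from a compact convex set built on a compact base `B` of `K` (a pointed closed cone
admits `e` with `‖u‖ ≤ e ⬝ᵥ u` on `K`, and `B = {u ∈ K | e ⬝ᵥ u = 1}`). For `K`-minimal `w = L x₀`,
separating the homogenized cone `{(L x - t w, A x - t b) | x, t ≥ 0}` from `-B × {0}` yields a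
dual-feasible `(l, μ)` with `l ⬝ᵥ w ≤ b ⬝ᵥ μ`. For `K`-maximal `w ∈ h(ℬ)` outside `L(𝒜)`,
separating `{(L x, A x) | x ≥ 0}` from the convex join of `(w, b)` and `-B × {0}` yields
`(l', μ')` with `l' ⬝ᵥ w < b ⬝ᵥ μ'`, and then `w + c u` dominates `w` in `h(ℬ)` for any
`u ∈ K \ {0}` and a suitable `c > 0`.
-/

open Matrix

section OrthantImage

variable {ι E : Type*} [Fintype ι] [NormedAddCommGroup E] [NormedSpace ℝ E]

theorem exists_nonneg_sub_smul_eq_zero {x z : ι → ℝ} (hx : 0 ≤ x) (hz : ∃ i, 0 < z i) :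
    ∃ r : ℝ, 0 ≤ x - r • z ∧ ∃ i, 0 < z i ∧ (x - r • z) i = 0 := by
  classical
  obtain ⟨j, hj⟩ := hz
  obtain ⟨i₀, hi₀, hmin⟩ := Finset.exists_min_image {i | 0 < z i} (fun i => x i / z i)
    ⟨j, by simpa using hj⟩
  rw [Finset.mem_filter_univ] at hi₀
  refine ⟨x i₀ / z i₀, fun i => ?_, i₀, hi₀, by simp [div_mul_cancel₀ _ hi₀.ne']⟩
  simp only [Pi.zero_apply, Pi.sub_apply, Pi.smul_apply, smul_eq_mul, sub_nonneg]
  rcases lt_or_ge 0 (z i) with hzi | hzi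
  · calc x i₀ / z i₀ * z i ≤ x i / z i * z i :=
          mul_le_mul_of_nonneg_right (hmin i ((Finset.mem_filter_univ i).mpr hzi)) hzi.le
      _ = x i := div_mul_cancel₀ _ hzi.ne'
  · exact (mul_nonpos_of_nonneg_of_nonpos (div_nonneg (hx i₀) hi₀.le) hzi).trans (hx i)

/-- Conic Carathéodory; `Submodule.pi {i | x' i = 0} fun _ => ⊥` is the space of vectors supported
on the support of `x'`. -/
theorem exists_nonneg_eq_of_disjoint_ker (f : (ι → ℝ) →ₗ[ℝ] E) {x : ι → ℝ} (hx : 0 ≤ x) :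
    ∃ x', 0 ≤ x' ∧ f x' = f x ∧
      Disjoint (LinearMap.ker f) (Submodule.pi {i | x' i = 0} fun _ => ⊥) := by
  classical
  induction h : (Finset.univ.filter fun i => x i ≠ 0).card using Nat.strong_induction_on
    generalizing x with
  | _ N ih =>
  by_cases hdisj : Disjoint (LinearMap.ker f) (Submodule.pi {i | x i = 0} fun _ => ⊥)
  · exact ⟨x, hx, rfl, hdisj⟩
  obtain ⟨z, hfz, hzx, hz⟩ : ∃ z, f z = 0 ∧ (∀ i, x i = 0 → z i = 0) ∧ ∃ i, 0 < z i := by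
    rw [Submodule.disjoint_def] at hdisj
    push Not at hdisj
    obtain ⟨z, hz, hzx, hz0⟩ := hdisj
    simp only [Submodule.mem_pi, Submodule.mem_bot, Set.mem_ofPred_eq] at hzx
    obtain ⟨i, hi⟩ := Function.ne_iff.mp hz0
    rcases hi.lt_or_gt with hi | hi
    · exact ⟨-z, by simpa using hz, fun j hj => by simp [hzx j hj], i, by simpa using hi⟩
    · exact ⟨z, hz, hzx, i, hi⟩
  -- moving from `x` along `-z` until a coordinate vanishes keeps `f x` and shrinks the support
  obtain ⟨r, hr, i₀, hzi₀, hri₀⟩ := exists_nonneg_sub_smul_eq_zero hx hz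
  have hsupp : (Finset.univ.filter fun i => (x - r • z) i ≠ 0) ⊂
      Finset.univ.filter fun i => x i ≠ 0 := by
    refine Finset.ssubset_iff_of_subset (fun i => ?_) |>.mpr ⟨i₀, ?_, ?_⟩
    · simp only [Finset.mem_filter_univ]
      exact mt fun hxi => by simp [hxi, hzx i hxi]
    · simpa using fun hxi => (hzx i₀ hxi ▸ hzi₀).false
    · simpa using hri₀
  obtain ⟨x', hx', hfx', hdisj'⟩ := ih _ (h ▸ Finset.card_lt_card hsupp) hr rfl
  exact ⟨x', hx', by simp [hfx', hfz], hdisj'⟩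

theorem isClosed_image_Ici (f : (ι → ℝ) →ₗ[ℝ] E) : IsClosed (f '' Set.Ici 0) := by
  have hunion : f '' Set.Ici 0 = ⋃ (s : Set ι)
      (_ : Disjoint (LinearMap.ker f) (Submodule.pi s fun _ => ⊥)),
      f '' (Set.Ici 0 ∩ (Submodule.pi s fun _ => (⊥ : Submodule ℝ ℝ) : Set (ι → ℝ))) := by
    refine subset_antisymm ?_ (Set.iUnion₂_subset fun s _ => Set.image_mono Set.inter_subset_left)
    rintro _ ⟨x, hx, rfl⟩
    obtain ⟨x', hx', hfx', hdisj⟩ := exists_nonneg_eq_of_disjoint_ker f hx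
    refine Set.mem_iUnion₂.mpr ⟨_, hdisj, x', ⟨hx', ?_⟩, hfx'⟩
    simp
  rw [hunion]
  refine isClosed_iUnion_of_finite fun s => isClosed_iUnion_of_finite fun hdisj => ?_
  set V : Submodule ℝ (ι → ℝ) := Submodule.pi s fun _ => ⊥
  have hemb : Topology.IsClosedEmbedding (f.domRestrict V) :=
    LinearMap.isClosedEmbedding_of_injective <| by
      rwa [LinearMap.ker_domRestrict, ← Submodule.disjoint_iff_comap_eq_bot, disjoint_comm]
  have himage : f '' (Set.Ici 0 ∩ V) = f.domRestrict V '' (V.subtype ⁻¹' Set.Ici 0) := by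
    rw [Set.inter_comm, ← Subtype.image_preimage_coe, Set.image_image]
    rfl
  rw [himage]
  exact hemb.isClosedMap _ (isClosed_Ici.preimage V.subtype.continuous_of_finiteDimensional)

end OrthantImage

theorem IsCompact.convexJoin {E : Type*} [NormedAddCommGroup E] [NormedSpace ℝ E] {s t : Set E}
    (hs : IsCompact s) (ht : IsCompact t) : IsCompact (_root_.convexJoin ℝ s t) := by
  have : _root_.convexJoin ℝ s t =
      (fun p : E × E × ℝ => AffineMap.lineMap p.1 p.2.1 p.2.2) '' s ×ˢ t ×ˢ Set.Icc 0 1 := by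
    ext z
    simp only [mem_convexJoin, segment_eq_image_lineMap, Set.mem_image, Set.mem_prod,
      Prod.exists]
    aesop
  rw [this]
  exact (hs.prod (ht.prod isCompact_Icc)).image (by fun_prop)

section Separation

variable {η ι : Type*} [Fintype η] [Fintype ι]

theorem exists_dotProduct_eq (f : (η → ℝ) →ₗ[ℝ] ℝ) : ∃ g : η → ℝ, ∀ x, f x = g ⬝ᵥ x := by
  classical
  refine ⟨fun i => f (Pi.single i 1), fun x => ?_⟩
  conv_lhs => rw [pi_eq_sum_univ' x]
  simp [dotProduct, mul_comm]

theorem exists_dotProduct_separation {C Q : Set (η → ℝ)} (hC : IsClosed C)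
    (hCconv : Convex ℝ C) (hC0 : (0 : η → ℝ) ∈ C)
    (hCsmul : ∀ c : ℝ, 0 ≤ c → ∀ z ∈ C, c • z ∈ C)
    (hQconv : Convex ℝ Q) (hQ : IsCompact Q) (hQC : Disjoint Q C) :
    ∃ g : η → ℝ, (∀ z ∈ C, 0 ≤ g ⬝ᵥ z) ∧ ∀ z ∈ Q, g ⬝ᵥ z < 0 := by
  let C' : ProperCone ℝ (η → ℝ) :=
    { carrier := C
      zero_mem' := hC0
      add_mem' := fun {u v} hu hv => by
        simpa [smul_add, smul_smul] using
          hCsmul 2 zero_le_two _ (hCconv hu hv (by norm_num : (0 : ℝ) ≤ 1 / 2)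
            (by norm_num : (0 : ℝ) ≤ 1 / 2) (by norm_num))
      smul_mem' := fun c z hz => hCsmul c c.2 z hz
      isClosed' := hC }
  obtain ⟨f, hfC, hfQ⟩ := C'.hyperplane_separation hQconv hQ hQC
  obtain ⟨g, hg⟩ := exists_dotProduct_eq f.toLinearMap
  exact ⟨g, fun z hz => hg z ▸ hfC z hz, fun z hz => hg z ▸ hfQ z hz⟩

/-- Farkas' lemma, separating a compact convex set instead of a point. -/
theorem exists_vecMul_nonneg_of_forall_mulVec_notMem (M : Matrix η ι ℝ) {Q : Set (η → ℝ)}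
    (hQconv : Convex ℝ Q) (hQ : IsCompact Q) (hMQ : ∀ x, 0 ≤ x → M *ᵥ x ∉ Q) :
    ∃ g : η → ℝ, 0 ≤ g ᵥ* M ∧ ∀ z ∈ Q, g ⬝ᵥ z < 0 := by
  classical
  obtain ⟨g, hgM, hgQ⟩ := exists_dotProduct_separation (C := M.mulVecLin '' Set.Ici 0)
    (isClosed_image_Ici _) ((convex_Ici 0).linear_image _) ⟨0, Set.mem_Ici.mpr le_rfl, by simp⟩
    (by rintro c hc _ ⟨x, hx, rfl⟩; exact ⟨c • x, smul_nonneg hc (Set.mem_Ici.mp hx), by simp⟩)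
    hQconv hQ
    (Set.disjoint_right.mpr (by rintro _ ⟨x, hx, rfl⟩; exact hMQ x hx))
  refine ⟨g, fun j => ?_, hgQ⟩
  have := hgM _ ⟨Pi.single j 1, Pi.single_nonneg.mpr zero_le_one, rfl⟩
  rwa [Matrix.mulVecLin_apply, dotProduct_mulVec, dotProduct_single, mul_one] at this

end Separation

section ConeBase

variable {η : Type*} [Fintype η] {K : Set (η → ℝ)}

theorem exists_dual_dotProduct_gt_one (hKcone : ∀ c : ℝ, 0 ≤ c → ∀ x ∈ K, c • x ∈ K)
    (hKclosed : IsClosed K) (hKconvex : Convex ℝ K) (hKpointed : K ∩ -K = {0}) {u : η → ℝ}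
    (hu : u ∈ K) (hu0 : u ≠ 0) : ∃ g : η → ℝ, (∀ z ∈ K, 0 ≤ g ⬝ᵥ z) ∧ 1 < g ⬝ᵥ u := by
  have hnu : -u ∉ K := fun h => by
    have : u ∈ K ∩ -K := ⟨hu, by simpa using h⟩
    rw [hKpointed, Set.mem_singleton_iff] at this
    exact hu0 this
  obtain ⟨g, hgK, hgu⟩ := exists_dotProduct_separation hKclosed hKconvex
    (Set.eq_singleton_iff_unique_mem.mp hKpointed).1.1 hKcone (convex_singleton _)
    isCompact_singleton (Set.disjoint_singleton_left.mpr hnu)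
  have hgu' : 0 < g ⬝ᵥ u := by simpa using hgu (-u) rfl
  refine ⟨(2 / (g ⬝ᵥ u)) • g, fun z hz => ?_, ?_⟩
  · rw [smul_dotProduct, smul_eq_mul]
    exact mul_nonneg (by positivity) (hgK z hz)
  · rw [smul_dotProduct, smul_eq_mul, div_mul_cancel₀ _ hgu'.ne']
    norm_num

theorem exists_norm_le_dotProduct (hKcone : ∀ c : ℝ, 0 ≤ c → ∀ x ∈ K, c • x ∈ K)
    (hKclosed : IsClosed K) (hKconvex : Convex ℝ K) (hKpointed : K ∩ -K = {0}) :
    ∃ e : η → ℝ, ∀ u ∈ K, ‖u‖ ≤ e ⬝ᵥ u := by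
  have hsep (u : ↥(K ∩ Metric.sphere 0 1)) :
      ∃ g : η → ℝ, (∀ z ∈ K, 0 ≤ g ⬝ᵥ z) ∧ 1 < g ⬝ᵥ (u : η → ℝ) :=
    exists_dual_dotProduct_gt_one hKcone hKclosed hKconvex hKpointed u.2.1
      (ne_zero_of_mem_unit_sphere ⟨(u : η → ℝ), u.2.2⟩)
  choose g hgK hgu using hsep
  obtain ⟨t, ht⟩ := ((isCompact_sphere (0 : η → ℝ) 1).inter_left hKclosed).elim_finite_subcover
    (fun u => {v | 1 < g u ⬝ᵥ v}) (fun u => isOpen_lt continuous_const (by fun_prop))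
    (fun u hu => Set.mem_iUnion.mpr ⟨⟨u, hu⟩, hgu _⟩)
  refine ⟨∑ u ∈ t, g u, fun u hu => ?_⟩
  rcases eq_or_ne u 0 with rfl | hu0
  · simp
  have hnorm : 0 < ‖u‖ := norm_pos_iff.mpr hu0
  set v := ‖u‖⁻¹ • u
  have hv : v ∈ K ∩ Metric.sphere 0 1 :=
    ⟨hKcone _ (inv_nonneg.mpr hnorm.le) u hu, by simp [v, norm_smul, hnorm.ne']⟩
  obtain ⟨i, hit, hiv⟩ := Set.mem_iUnion₂.mp (ht hv)
  have hev : 1 ≤ (∑ u ∈ t, g u) ⬝ᵥ v := by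
    rw [sum_dotProduct]
    exact (le_of_lt hiv).trans (Finset.single_le_sum (fun j _ => hgK j _ hv.1) hit)
  calc ‖u‖ = ‖u‖ * 1 := (mul_one _).symm
    _ ≤ ‖u‖ * ((∑ u ∈ t, g u) ⬝ᵥ v) := by gcongr
    _ = (∑ u ∈ t, g u) ⬝ᵥ u := by
      rw [dotProduct_smul, smul_eq_mul, mul_inv_cancel_left₀ hnorm.ne']

structure IsCompactBase (K B : Set (η → ℝ)) : Prop where
  isCompact : IsCompact B
  convex : Convex ℝ B
  subset : B ⊆ K \ {0}
  exists_smul_mem : ∀ u ∈ K, u ≠ 0 → ∃ c : ℝ, 0 < c ∧ c • u ∈ B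

theorem exists_isCompactBase (hKcone : ∀ c : ℝ, 0 ≤ c → ∀ x ∈ K, c • x ∈ K)
    (hKclosed : IsClosed K) (hKconvex : Convex ℝ K) (hKpointed : K ∩ -K = {0}) :
    ∃ B, IsCompactBase K B := by
  obtain ⟨e, he⟩ := exists_norm_le_dotProduct hKcone hKclosed hKconvex hKpointed
  refine ⟨{u ∈ K | e ⬝ᵥ u = 1}, ⟨?_, ?_, ?_, ?_⟩⟩
  · refine Metric.isCompact_of_isClosed_isBounded
      (hKclosed.inter (isClosed_eq (by fun_prop) continuous_const))
      ((Metric.isBounded_closedBall (x := 0) (r := 1)).subset fun u hu => ?_)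
    simpa [hu.2] using he u hu.1
  · exact fun u hu v hv a b ha hb hab =>
      ⟨hKconvex hu.1 hv.1 ha hb hab, by simp [hu.2, hv.2, hab]⟩
  · exact fun u hu => ⟨hu.1, by rintro rfl; simp at hu⟩
  · intro u hu hu0
    have he0 : 0 < e ⬝ᵥ u := (norm_pos_iff.mpr hu0).trans_le (he u hu)
    exact ⟨(e ⬝ᵥ u)⁻¹, inv_pos.mpr he0, hKcone _ (inv_pos.mpr he0).le u hu,
      by rw [dotProduct_smul, smul_eq_mul, inv_mul_cancel₀ he0.ne']⟩

theorem IsCompactBase.dotProduct_pos {B : Set (η → ℝ)} (hB : IsCompactBase K B) {l : η → ℝ}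
    (hl : ∀ u ∈ B, 0 < l ⬝ᵥ u) : ∀ u ∈ K, u ≠ 0 → 0 < l ⬝ᵥ u := by
  intro u hu hu0
  obtain ⟨c, hc, hcu⟩ := hB.exists_smul_mem u hu hu0
  have := hl _ hcu
  rw [dotProduct_smul, smul_eq_mul] at this
  exact pos_of_mul_pos_right this hc.le

theorem IsCompactBase.image_sumElim_neg {κ : Type*} {B : Set (η → ℝ)} (hB : IsCompactBase K B) :
    IsCompact ((fun u => Sum.elim (-u) (0 : κ → ℝ)) '' B) ∧
      Convex ℝ ((fun u => Sum.elim (-u) (0 : κ → ℝ)) '' B) := by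
  let f : (η → ℝ) →ₗ[ℝ] (η ⊕ κ → ℝ) :=
    { toFun := fun u => Sum.elim (-u) 0
      map_add' := fun u v => by ext (i | i) <;> simp [add_comm]
      map_smul' := fun c u => by ext (i | i) <;> simp }
  exact ⟨hB.isCompact.image f.continuous_of_finiteDimensional, hB.convex.linear_image f⟩

end ConeBase

theorem exists_vecMul_eq_of_ne_zero {η κ : Type*} [Fintype η] {l : η → ℝ} (hl : l ≠ 0)
    (μ : κ → ℝ) : ∃ U : Matrix η κ ℝ, l ᵥ* U = μ :=
  ⟨(l ⬝ᵥ l)⁻¹ • vecMulVec l μ, by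
    rw [vecMul_smul, vecMul_vecMulVec, smul_smul,
      inv_mul_cancel₀ (dotProduct_self_eq_zero.not.mpr hl), one_smul]⟩

theorem exists_nonneg_mulVec_eq_of_mulVec_eq_smul {η κ ι : Type*} [Fintype ι] (L : Matrix η ι ℝ)
    {A : Matrix κ ι ℝ} {b : κ → ℝ} {x₀ x : ι → ℝ} {t : ℝ}
    (hx₀ : 0 ≤ x₀) (hAx₀ : A *ᵥ x₀ = b) (hx : 0 ≤ x) (ht : 0 ≤ t) (hAx : A *ᵥ x = t • b) :
    ∃ (x' : ι → ℝ) (c : ℝ), 0 ≤ x' ∧ A *ᵥ x' = b ∧ 0 < c ∧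
      L *ᵥ x₀ - L *ᵥ x' = c • (t • L *ᵥ x₀ - L *ᵥ x) := by
  rcases ht.eq_or_lt with rfl | ht
  · refine ⟨x₀ + x, 1, add_nonneg hx₀ hx, by simp [mulVec_add, hAx₀, hAx], one_pos, ?_⟩
    simp [mulVec_add]
  · refine ⟨t⁻¹ • x, t⁻¹, smul_nonneg (inv_nonneg.mpr ht.le) hx, ?_, inv_pos.mpr ht, ?_⟩
    · rw [mulVec_smul, hAx, smul_smul, inv_mul_cancel₀ ht.ne', one_smul]
    · rw [smul_sub, smul_smul, inv_mul_cancel₀ ht.ne', one_smul, mulVec_smul]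

section VectorLP

variable {η κ ι : Type*} [Fintype η] [Fintype κ]
  {K B : Set (η → ℝ)} {L : Matrix η ι ℝ} {A : Matrix κ ι ℝ} {b : κ → ℝ}

/-- `max {b ⬝ᵥ μ | μ ᵥ* A ≤ l ᵥ* L}` is the LP dual of `min {l ⬝ᵥ L *ᵥ x | 0 ≤ x, A *ᵥ x = b}`. -/
def DualFeasible (K : Set (η → ℝ)) (L : Matrix η ι ℝ) (A : Matrix κ ι ℝ) (l : η → ℝ)
    (μ : κ → ℝ) : Prop :=
  (∀ u ∈ K, u ≠ 0 → 0 < l ⬝ᵥ u) ∧ μ ᵥ* A ≤ l ᵥ* L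

def primalImage [Fintype ι] (L : Matrix η ι ℝ) (A : Matrix κ ι ℝ) (b : κ → ℝ) : Set (η → ℝ) :=
  {w | ∃ x, (0 ≤ x ∧ A *ᵥ x = b) ∧ L *ᵥ x = w}

/-- The paper's `h(ℬ)`, a triple `(λ, U, v) ∈ ℬ` being recorded only through `l = λ` and
`μ = Uᵀλ`. -/
def dualImage (K : Set (η → ℝ)) (L : Matrix η ι ℝ) (A : Matrix κ ι ℝ) (b : κ → ℝ) :
    Set (η → ℝ) :=
  {w | ∃ l μ, DualFeasible K L A l μ ∧ l ⬝ᵥ w = b ⬝ᵥ μ}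

theorem DualFeasible.dotProduct_mulVec_le [Fintype ι] {l : η → ℝ} {μ : κ → ℝ}
    (h : DualFeasible K L A l μ) {x : ι → ℝ} (hx : 0 ≤ x) :
    μ ⬝ᵥ (A *ᵥ x) ≤ l ⬝ᵥ (L *ᵥ x) := by
  rw [dotProduct_mulVec, dotProduct_mulVec]
  exact dotProduct_le_dotProduct_of_nonneg_right h.2 hx

theorem DualFeasible.sub_mulVec_eq_zero [Fintype ι] {l : η → ℝ} {μ : κ → ℝ}
    (h : DualFeasible K L A l μ) {v : η → ℝ} (hv : l ⬝ᵥ v = b ⬝ᵥ μ) {x : ι → ℝ} (hx : 0 ≤ x)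
    (hAx : A *ᵥ x = b) (hK : v - L *ᵥ x ∈ K) : v - L *ᵥ x = 0 := by
  by_contra hne
  have hpos := h.1 _ hK hne
  have hweak := h.dotProduct_mulVec_le hx
  rw [hAx, dotProduct_comm, ← hv] at hweak
  rw [dotProduct_sub] at hpos
  linarith

theorem exists_matrix_iff_mem_dualImage (hK : ∃ u ∈ K, u ≠ 0) (w : η → ℝ) :
    (∃ (l : η → ℝ) (U : Matrix η κ ℝ) (v : η → ℝ), ((∀ u ∈ K, u ≠ 0 → 0 < l ⬝ᵥ u) ∧
      l ⬝ᵥ v = 0 ∧ ∀ i, 0 ≤ ((L - U * A)ᵀ *ᵥ l) i) ∧ U *ᵥ b + v = w) ↔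
    w ∈ dualImage K L A b := by
  have hfeas : ∀ (l : η → ℝ) (U : Matrix η κ ℝ),
      (∀ i, 0 ≤ ((L - U * A)ᵀ *ᵥ l) i) ↔ (l ᵥ* U) ᵥ* A ≤ l ᵥ* L := fun l U => by
    rw [mulVec_transpose, vecMul_sub, ← vecMul_vecMul, ← sub_nonneg]
    rfl
  constructor
  · rintro ⟨l, U, v, ⟨hl, hlv, hLU⟩, rfl⟩
    refine ⟨l, l ᵥ* U, ⟨hl, (hfeas l U).mp hLU⟩, ?_⟩
    rw [dotProduct_add, hlv, add_zero, dotProduct_mulVec, dotProduct_comm]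
  · rintro ⟨l, μ, ⟨hl, hμ⟩, hw⟩
    obtain ⟨u, hu, hu0⟩ := hK
    have hl0 : l ≠ 0 := by rintro rfl; simpa using hl u hu hu0
    obtain ⟨U, rfl⟩ := exists_vecMul_eq_of_ne_zero hl0 μ
    refine ⟨l, U, w - U *ᵥ b, ⟨hl, ?_, (hfeas l U).mpr hμ⟩, add_sub_cancel _ _⟩
    rw [dotProduct_sub, hw, dotProduct_mulVec, dotProduct_comm, sub_self]

theorem mem_dualImage_of_minimal [Fintype ι] (hKcone : ∀ c : ℝ, 0 ≤ c → ∀ x ∈ K, c • x ∈ K)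
    (hB : IsCompactBase K B) {w : η → ℝ} (hw : w ∈ primalImage L A b)
    (hmin : ¬ ∃ w' ∈ primalImage L A b, w - w' ∈ K ∧ w - w' ≠ 0) :
    w ∈ dualImage K L A b := by
  obtain ⟨x₀, ⟨hx₀, hAx₀⟩, rfl⟩ := hw
  obtain ⟨hQ, hQconv⟩ := hB.image_sumElim_neg (κ := κ)
  -- the columns of `M` generate the cone `{(L x - t • L x₀, A x - t • b) | 0 ≤ x, 0 ≤ t}`
  set M := fromCols (fromRows L A) (replicateCol Unit (-Sum.elim (L *ᵥ x₀) b))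
  have hMQ : ∀ y, 0 ≤ y → M *ᵥ y ∉ (fun u => Sum.elim (-u) (0 : κ → ℝ)) '' B := by
    rintro y hy ⟨u, huB, hMy⟩
    obtain ⟨huK, hu0⟩ := hB.subset huB
    have hL : y (Sum.inr ()) • L *ᵥ x₀ - L *ᵥ (y ∘ Sum.inl) = u := funext fun i => by
      have := congrFun hMy (Sum.inl i)
      simp [M, mulVec, dotProduct, mul_comm] at this ⊢
      linarith
    have hA : A *ᵥ (y ∘ Sum.inl) = y (Sum.inr ()) • b := funext fun i => by
      simpa [M, mulVec, dotProduct, mul_comm, add_eq_zero_iff_eq_neg] using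
        (congrFun hMy (Sum.inr i)).symm
    obtain ⟨x, c, hx, hAx, hc, hLx⟩ := exists_nonneg_mulVec_eq_of_mulVec_eq_smul L hx₀ hAx₀
      (x := y ∘ Sum.inl) (fun i => hy _) (hy _) hA
    rw [hL] at hLx
    have hcu : c • u = 0 := by
      by_contra hne
      exact hmin ⟨_, ⟨x, ⟨hx, hAx⟩, rfl⟩, hLx ▸ hKcone c hc.le u huK, hLx ▸ hne⟩
    exact hu0 ((smul_eq_zero.mp hcu).resolve_left hc.ne')
  obtain ⟨g, hgM, hgQ⟩ := exists_vecMul_nonneg_of_forall_mulVec_notMem M hQconv hQ hMQ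
  obtain ⟨l, μ, rfl⟩ : ∃ l μ, g = Sum.elim l (-μ) := ⟨g ∘ Sum.inl, -(g ∘ Sum.inr), by simp⟩
  rw [← Sum.elim_zero_zero, vecMul_fromCols, Sum.elim_le_elim_iff] at hgM
  have hfeas : DualFeasible K L A l μ :=
    ⟨hB.dotProduct_pos fun u hu => by simpa using hgQ _ ⟨u, hu, rfl⟩,
      by simpa [neg_vecMul, ← sub_eq_add_neg] using hgM.1⟩
  have hle : l ⬝ᵥ (L *ᵥ x₀) ≤ b ⬝ᵥ μ := by
    simpa [mulVec_replicateCol_eq_const, dotProduct_comm μ b] using hgM.2 ()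
  have hweak := hfeas.dotProduct_mulVec_le hx₀
  rw [hAx₀, dotProduct_comm] at hweak
  exact ⟨l, μ, hfeas, hle.antisymm hweak⟩

theorem exists_dualFeasible_lt_of_notMem [Fintype ι] (hB : IsCompactBase K B)
    (hBne : B.Nonempty) {w : η → ℝ} (hw : w ∈ dualImage K L A b) (hwL : w ∉ primalImage L A b) :
    ∃ l μ, DualFeasible K L A l μ ∧ l ⬝ᵥ w < b ⬝ᵥ μ := by
  obtain ⟨l, μ, h, hlw⟩ := hw
  obtain ⟨hQ, hQconv⟩ := hB.image_sumElim_neg (κ := κ)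
  set Q := convexJoin ℝ {Sum.elim w b} ((fun u => Sum.elim (-u) (0 : κ → ℝ)) '' B)
  have hMQ : ∀ x, 0 ≤ x → fromRows L A *ᵥ x ∉ Q := by
    intro x hx hxQ
    obtain ⟨_, rfl, _, ⟨u, huB, rfl⟩, a, c, ha, hc, hac, hxac⟩ := mem_convexJoin.mp hxQ
    obtain ⟨huK, hu0⟩ := hB.subset huB
    have hL : a • w - c • u = L *ᵥ x := funext fun i => by
      simpa [sub_eq_add_neg] using congrFun hxac (Sum.inl i)
    have hA : a • b = A *ᵥ x := funext fun i => by simpa using congrFun hxac (Sum.inr i)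
    -- weak duality forces the `-B × {0}` part of the convex combination to vanish
    have hweak := h.dotProduct_mulVec_le hx
    rw [← hL, ← hA, dotProduct_smul, dotProduct_sub, dotProduct_smul, dotProduct_smul, hlw,
      dotProduct_comm μ b] at hweak
    simp only [smul_eq_mul] at hweak
    have hc0 : c = 0 := le_antisymm (by nlinarith [h.1 u huK hu0]) hc
    subst hc0
    rw [add_zero] at hac
    subst hac
    exact hwL ⟨x, ⟨hx, by simpa using hA.symm⟩, by simpa using hL.symm⟩
  obtain ⟨g, hgM, hgQ⟩ := exists_vecMul_nonneg_of_forall_mulVec_notMem (fromRows L A)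
    ((convex_singleton _).convexJoin hQconv) (isCompact_singleton.convexJoin hQ) hMQ
  obtain ⟨l', μ', rfl⟩ : ∃ l μ, g = Sum.elim l (-μ) := ⟨g ∘ Sum.inl, -(g ∘ Sum.inr), by simp⟩
  refine ⟨l', μ', ⟨hB.dotProduct_pos fun u hu => ?_, ?_⟩, ?_⟩
  · simpa using hgQ _ (subset_convexJoin_right (Set.singleton_nonempty _) ⟨u, hu, rfl⟩)
  · simpa [neg_vecMul, ← sub_eq_add_neg] using hgM
  · have := hgQ _ (subset_convexJoin_left (hBne.image _) rfl)
    simp [dotProduct_comm μ' b] at this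
    linarith

theorem DualFeasible.exists_dotProduct_eq_sub_mem
    (hKcone : ∀ c : ℝ, 0 ≤ c → ∀ x ∈ K, c • x ∈ K) {l : η → ℝ} {μ : κ → ℝ}
    (h : DualFeasible K L A l μ) {w : η → ℝ} (hlt : l ⬝ᵥ w < b ⬝ᵥ μ) {u : η → ℝ} (hu : u ∈ K)
    (hu0 : u ≠ 0) : ∃ w', l ⬝ᵥ w' = b ⬝ᵥ μ ∧ w' - w ∈ K ∧ w' - w ≠ 0 := by
  have hlu := h.1 u hu hu0
  set c := (b ⬝ᵥ μ - l ⬝ᵥ w) / (l ⬝ᵥ u)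
  have hc : 0 < c := div_pos (sub_pos.mpr hlt) hlu
  refine ⟨w + c • u, ?_, ?_, ?_⟩
  · rw [dotProduct_add, dotProduct_smul, smul_eq_mul, div_mul_cancel₀ _ hlu.ne']
    ring
  · simpa using hKcone c hc.le u hu
  · simpa using ⟨hc.ne', hu0⟩

theorem mem_primalImage_of_maximal [Fintype ι] (hKcone : ∀ c : ℝ, 0 ≤ c → ∀ x ∈ K, c • x ∈ K)
    (hB : IsCompactBase K B) {u : η → ℝ} (hu : u ∈ K) (hu0 : u ≠ 0) {w : η → ℝ}
    (hw : w ∈ dualImage K L A b)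
    (hmax : ¬ ∃ w' ∈ dualImage K L A b, w' - w ∈ K ∧ w' - w ≠ 0) :
    w ∈ primalImage L A b := by
  by_contra hwL
  obtain ⟨c, -, hcu⟩ := hB.exists_smul_mem u hu hu0
  obtain ⟨l, μ, h, hlt⟩ := exists_dualFeasible_lt_of_notMem hB ⟨_, hcu⟩ hw hwL
  obtain ⟨w', hw', hK, hne⟩ := h.exists_dotProduct_eq_sub_mem hKcone hlt hu hu0
  exact hmax ⟨w', ⟨l, μ, h, hw'⟩, hK, hne⟩

theorem minimal_primalImage_eq_maximal_dualImage [Fintype ι]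
    (hKcone : ∀ c : ℝ, 0 ≤ c → ∀ x ∈ K, c • x ∈ K) (hKclosed : IsClosed K)
    (hKconvex : Convex ℝ K) (hKpointed : K ∩ -K = {0}) {u : η → ℝ} (hu : u ∈ K) (hu0 : u ≠ 0) :
    {w ∈ primalImage L A b | ¬ ∃ w' ∈ primalImage L A b, w - w' ∈ K ∧ w - w' ≠ 0} =
      {w ∈ dualImage K L A b | ¬ ∃ w' ∈ dualImage K L A b, w' - w ∈ K ∧ w' - w ≠ 0} := by
  obtain ⟨B, hB⟩ := exists_isCompactBase hKcone hKclosed hKconvex hKpointed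
  ext w
  constructor
  · rintro ⟨hw, hmin⟩
    refine ⟨mem_dualImage_of_minimal hKcone hB hw hmin, ?_⟩
    rintro ⟨w', ⟨l, μ, h, hlw'⟩, hK, hne⟩
    obtain ⟨x, ⟨hx, hAx⟩, rfl⟩ := hw
    exact hne (h.sub_mulVec_eq_zero hlw' hx hAx hK)
  · rintro ⟨hw, hmax⟩
    refine ⟨mem_primalImage_of_maximal hKcone hB hu hu0 hw hmax, ?_⟩
    rintro ⟨_, ⟨x, ⟨hx, hAx⟩, rfl⟩, hK, hne⟩
    obtain ⟨l, μ, h, hlw⟩ := hw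
    exact hne (h.sub_mulVec_eq_zero hlw hx hAx hK)

end VectorLP

theorem stmt6_general (k n m : ℕ) (K : Set (Fin k → ℝ))
    (hKcone : ∀ (c : ℝ), 0 ≤ c → ∀ x ∈ K, c • x ∈ K)
    (hKclosed : IsClosed K) (hKconvex : Convex ℝ K)
    (hKpointed : K ∩ (-K) = {0})
    (hKne : K ≠ {0})
    (L : Matrix (Fin k) (Fin n) ℝ) (A : Matrix (Fin m) (Fin n) ℝ) (b : Fin m → ℝ)
    (LA hB : Set (Fin k → ℝ))
    (hLA : LA = {w | ∃ x : Fin n → ℝ, ((∀ i, 0 ≤ x i) ∧ A *ᵥ x = b) ∧ L *ᵥ x = w})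
    (hhB : hB = {w | ∃ (l : Fin k → ℝ) (U : Matrix (Fin k) (Fin m) ℝ) (v : Fin k → ℝ),
      ((∀ u ∈ K, u ≠ 0 → 0 < l ⬝ᵥ u) ∧ l ⬝ᵥ v = 0 ∧
        ∀ i, 0 ≤ ((L - U * A)ᵀ *ᵥ l) i) ∧ U *ᵥ b + v = w}) :
    {w ∈ LA | ¬ ∃ w' ∈ LA, w - w' ∈ K ∧ w - w' ≠ 0} =
    {w ∈ hB | ¬ ∃ w' ∈ hB, w' - w ∈ K ∧ w' - w ≠ 0} := by
  obtain ⟨u, hu, hu0⟩ : ∃ u ∈ K, u ≠ 0 := by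
    by_contra! hK
    exact hKne (Set.eq_singleton_iff_unique_mem.mpr
      ⟨(Set.eq_singleton_iff_unique_mem.mp hKpointed).1.1, hK⟩)
  have hLA' : LA = primalImage L A b := hLA
  have hhB' : hB = dualImage K L A b :=
    hhB.trans (Set.ext (exists_matrix_iff_mem_dualImage ⟨u, hu, hu0⟩))
  rw [hLA', hhB']
  exact minimal_primalImage_eq_maximal_dualImage hKcone hKclosed hKconvex hKpointed hu hu0

theorem stmt6 (k n m : ℕ) (K : Set (Fin k → ℝ))
    (hKcone : ∀ (c : ℝ), 0 ≤ c → ∀ x ∈ K, c • x ∈ K)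
    (hKclosed : IsClosed K) (hKconvex : Convex ℝ K)
    (hKpointed : K ∩ (-K) = {0})
    (hKne : K ≠ {0}) (hKuniv : K ≠ Set.univ)
    (L : Matrix (Fin k) (Fin n) ℝ) (A : Matrix (Fin m) (Fin n) ℝ) (b : Fin m → ℝ)
    (LA hB : Set (Fin k → ℝ))
    (hLA : LA = {w | ∃ x : Fin n → ℝ, ((∀ i, 0 ≤ x i) ∧ A *ᵥ x = b) ∧ L *ᵥ x = w})
    (hhB : hB = {w | ∃ (l : Fin k → ℝ) (U : Matrix (Fin k) (Fin m) ℝ) (v : Fin k → ℝ),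
      ((∀ u ∈ K, u ≠ 0 → 0 < l ⬝ᵥ u) ∧ l ⬝ᵥ v = 0 ∧
        ∀ i, 0 ≤ ((L - U * A)ᵀ *ᵥ l) i) ∧ U *ᵥ b + v = w}) :
    {w ∈ LA | ¬ ∃ w' ∈ LA, w - w' ∈ K ∧ w - w' ≠ 0} =
    {w ∈ hB | ¬ ∃ w' ∈ hB, w' - w ∈ K ∧ w' - w ≠ 0} :=
  stmt6_general k n m K hKcone hKclosed hKconvex hKpointed hKne L A b LA hB hLA hhB
end

section
/- If 𝒜 = {x ∈ ℝ^n_+ : Ax = b} is nonempty, then the problem of minimizing Lx over 𝒜 with respect to K has no efficient solutions if and only if ℬ = {(λ, U, v) ∈ K*⁰ × ℝ^{k×m} × ℝ^k : λᵀv = 0, (L − UA)ᵀλ ∈ ℝ^n_+} is empty. -/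
/-!
Efficient points are characterised by scalarisation. If `l` is strictly positive on `K \ {0}` and
`y = Uᵀ l` is feasible for the dual of the linear program `min (Lᵀ l) ⬝ᵥ x` over
`𝒜 = {x ≥ 0 | A x = b}`, that program is bounded below, hence (its values forming a closed set,
because finitely generated cones are closed) attains its minimum, and a minimiser is efficient.
Conversely, if `x̄` is efficient, the pointed cone `K × {0}` meets the closed cone
`{(-L x, -A x) | x ≥ 0}` only at the origin; separating them strictly (using a compact base of
`K`) yields `(l, ν)` with `l` strictly positive on `K \ {0}` and `Lᵀ l + Aᵀ ν ≥ 0`, and `U` is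
any matrix with `Uᵀ l = -ν`.
-/

open Matrix Set

section FinitelyGeneratedCone

variable {ι : Type*}

def nonnegSupportedIn (s : Finset ι) : Set (ι → ℝ) := {x | 0 ≤ x ∧ ∀ i ∉ s, x i = 0}

lemma nonnegSupportedIn_mono {s t : Finset ι} (hst : s ⊆ t) :
    nonnegSupportedIn s ⊆ nonnegSupportedIn t :=
  fun _ hx => ⟨hx.1, fun i hi => hx.2 i fun his => hi (hst his)⟩

/-- The reduction step of Carathéodory's theorem for cones: move from `x` along `g` until a
first coordinate vanishes. -/
lemma exists_sub_smul_mem_nonnegSupportedIn_erase [DecidableEq ι] {s : Finset ι} {x g : ι → ℝ}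
    (hx : x ∈ nonnegSupportedIn s) (hgs : ∀ i ∉ s, g i = 0) (hg : g ≠ 0) :
    ∃ j ∈ s, ∃ t : ℝ, x - t • g ∈ nonnegSupportedIn (s.erase j) := by
  wlog hpos : ∃ j, 0 < g j generalizing g
  · obtain ⟨j, hj⟩ := Function.ne_iff.mp hg
    obtain ⟨j', hj's, t, ht⟩ := this (g := -g) (fun i hi => by simp [hgs i hi]) (neg_ne_zero.2 hg)
      ⟨j, neg_pos.2 ((not_lt.1 fun h => hpos ⟨j, h⟩).lt_of_ne hj)⟩
    exact ⟨j', hj's, -t, by simpa using ht⟩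
  obtain ⟨j₀, hj₀⟩ := hpos
  have hj₀s : j₀ ∈ s := by_contra fun h => hj₀.ne' (hgs j₀ h)
  obtain ⟨j, hj, hjmin⟩ := (s.filter (0 < g ·)).exists_min_image (fun i => x i / g i)
    ⟨j₀, Finset.mem_filter.2 ⟨hj₀s, hj₀⟩⟩
  rw [Finset.mem_filter] at hj
  refine ⟨j, hj.1, x j / g j, fun i => ?_, fun i hi => ?_⟩
  · simp only [Pi.sub_apply, Pi.smul_apply, smul_eq_mul, Pi.zero_apply, sub_nonneg]
    rcases lt_or_ge 0 (g i) with hgi | hgi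
    · have his : i ∈ s := by_contra fun h => hgi.ne' (hgs i h)
      exact (le_div_iff₀ hgi).1 (hjmin i (Finset.mem_filter.2 ⟨his, hgi⟩))
    · exact (mul_nonpos_of_nonneg_of_nonpos (div_nonneg (hx.1 j) hj.2.le) hgi).trans (hx.1 i)
  · rcases eq_or_ne i j with rfl | hij
    · simp [div_mul_cancel₀ _ hj.2.ne']
    · have his : i ∉ s := fun h => hi (Finset.mem_erase.2 ⟨hij, h⟩)
      simp [hx.2 i his, hgs i his]

variable [Fintype ι] {E : Type*} [AddCommGroup E] [Module ℝ E] [TopologicalSpace E]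
  [IsTopologicalAddGroup E] [ContinuousSMul ℝ E] [T2Space E]

theorem isClosed_image_nonnegSupportedIn (f : (ι → ℝ) →ₗ[ℝ] E) (s : Finset ι) :
    IsClosed (f '' nonnegSupportedIn s) := by
  classical
  induction s using Finset.strongInduction with
  | H s ih =>
  let V := LinearMap.ker (LinearMap.funLeft ℝ ℝ ((↑) : {i // i ∉ s} → ι))
  have hV (x : ι → ℝ) : x ∈ V ↔ ∀ i ∉ s, x i = 0 := by
    simp [V, funext_iff, LinearMap.funLeft_apply]
  by_cases hinj : LinearMap.ker (f.domRestrict V) = ⊥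
  · have himage : f '' nonnegSupportedIn s = f.domRestrict V '' {v | 0 ≤ (v : ι → ℝ)} := by
      ext y
      constructor
      · rintro ⟨x, hx, rfl⟩
        exact ⟨⟨x, (hV x).2 hx.2⟩, hx.1, rfl⟩
      · rintro ⟨v, hv, rfl⟩
        exact ⟨v, ⟨hv, (hV v).1 v.2⟩, rfl⟩
    rw [himage]
    exact (LinearMap.isClosedEmbedding_of_injective hinj).isClosedMap _
      (isClosed_le continuous_const continuous_subtype_val)
  · obtain ⟨g, hgker, hg0⟩ := (Submodule.ne_bot_iff _).1 hinj
    have hfg : f g = 0 := hgker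
    have hunion : f '' nonnegSupportedIn s = ⋃ j ∈ s, f '' nonnegSupportedIn (s.erase j) := by
      refine subset_antisymm ?_ (iUnion₂_subset fun j _ =>
        image_mono (nonnegSupportedIn_mono (s.erase_subset j)))
      rintro _ ⟨x, hx, rfl⟩
      obtain ⟨j, hj, t, ht⟩ := exists_sub_smul_mem_nonnegSupportedIn_erase hx ((hV g).1 g.2)
        (by simpa using hg0)
      exact mem_biUnion hj ⟨_, ht, by simp [hfg]⟩
    rw [hunion]
    exact isClosed_biUnion_finset fun j hj => ih _ (s.erase_ssubset hj)

theorem isClosed_image_nonneg (f : (ι → ℝ) →ₗ[ℝ] E) : IsClosed (f '' {x | 0 ≤ x}) := by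
  simpa [nonnegSupportedIn] using isClosed_image_nonnegSupportedIn f Finset.univ

end FinitelyGeneratedCone

theorem exists_forall_dotProduct_le_of_bddBelow {ι κ : Type*} [Fintype ι]
    (A : Matrix κ ι ℝ) (b : κ → ℝ) (c : ι → ℝ) (hfeas : ∃ x, 0 ≤ x ∧ A *ᵥ x = b)
    (hbdd : ∃ m, ∀ x, 0 ≤ x → A *ᵥ x = b → m ≤ c ⬝ᵥ x) :
    ∃ x, (0 ≤ x ∧ A *ᵥ x = b) ∧ ∀ y, 0 ≤ y → A *ᵥ y = b → c ⬝ᵥ x ≤ c ⬝ᵥ y := by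
  set T := {t | ∃ x, (0 ≤ x ∧ A *ᵥ x = b) ∧ c ⬝ᵥ x = t}
  have hT :
      T = (fun t => (b, t)) ⁻¹' (A.mulVecLin.prod (dotProductBilin ℝ ℝ c) '' {x | 0 ≤ x}) := by
    ext t
    simp [T, and_assoc]
  have hTclosed : IsClosed T :=
    hT ▸ (isClosed_image_nonneg _).preimage (continuous_const.prodMk continuous_id)
  obtain ⟨m, hm⟩ := hbdd
  have hTbdd : BddBelow T := ⟨m, by rintro _ ⟨x, hx, rfl⟩; exact hm x hx.1 hx.2⟩
  obtain ⟨x₀, hx₀⟩ := hfeas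
  obtain ⟨x, hx, hxT⟩ := hTclosed.csInf_mem ⟨_, x₀, hx₀, rfl⟩ hTbdd
  exact ⟨x, hx, fun y hy₀ hy => hxT ▸ csInf_le hTbdd ⟨y, ⟨hy₀, hy⟩, rfl⟩⟩

section Separation

variable {E : Type*} [NormedAddCommGroup E] [NormedSpace ℝ E]

lemma nonneg_apply_of_lt_apply_of_smul_mem {C : Set E}
    (hC : ∀ t : ℝ, 0 ≤ t → ∀ x ∈ C, t • x ∈ C) {f : StrongDual ℝ E} {c : ℝ}
    (hf : ∀ x ∈ C, c < f x) {x : E} (hx : x ∈ C) : 0 ≤ f x := by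
  by_contra! hneg
  have hc : c < 0 := by simpa using hf _ (hC 0 le_rfl x hx)
  have := hf _ (hC (c / f x) (div_nonneg_of_nonpos hc.le hneg.le) x hx)
  rw [map_smul, smul_eq_mul, div_mul_cancel₀ _ hneg.ne] at this
  exact this.false

lemma exists_nonneg_on_apply_neg_of_notMem {C : Set E}
    (hCcone : ∀ t : ℝ, 0 ≤ t → ∀ x ∈ C, t • x ∈ C) (hCclosed : IsClosed C)
    (hCconvex : Convex ℝ C) (hC0 : (0 : E) ∈ C) {z : E} (hz : z ∉ C) :
    ∃ f : StrongDual ℝ E, (∀ x ∈ C, 0 ≤ f x) ∧ f z < 0 := by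
  obtain ⟨f, u, hfz, hfC⟩ := geometric_hahn_banach_point_closed hCconvex hCclosed hz
  exact ⟨f, fun x hx => nonneg_apply_of_lt_apply_of_smul_mem hCcone hfC hx,
    hfz.trans (by simpa using hfC 0 hC0)⟩

variable [FiniteDimensional ℝ E] {K : Set E}
  (hKcone : ∀ t : ℝ, 0 ≤ t → ∀ x ∈ K, t • x ∈ K) (hKclosed : IsClosed K)
  (hKconvex : Convex ℝ K) (hKpointed : ∀ u ∈ K, -u ∈ K → u = 0)
include hKcone hKclosed hKconvex hKpointed

theorem exists_mul_norm_le_apply_of_pointed :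
    ∃ (l : StrongDual ℝ E) (δ : ℝ), 0 < δ ∧ ∀ u ∈ K, δ * ‖u‖ ≤ l u := by
  set B := K ∩ Metric.sphere 0 1
  have hB : IsCompact B := (isCompact_sphere 0 1).inter_left hKclosed
  have hsep : ∀ u ∈ B, ∃ f : StrongDual ℝ E, (∀ x ∈ K, 0 ≤ f x) ∧ 0 < f u := by
    rintro u ⟨huK, hu⟩
    have hu0 : u ≠ 0 := by rintro rfl; simp at hu
    obtain ⟨f, hfK, hfu⟩ := exists_nonneg_on_apply_neg_of_notMem hKcone hKclosed hKconvex
      (by simpa using hKcone 0 le_rfl u huK) fun h => hu0 (hKpointed u huK h)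
    exact ⟨f, hfK, by simpa using hfu⟩
  choose! f hfK hfu using hsep
  -- by compactness finitely many `f u` suffice: their sum is positive on `B`
  obtain ⟨t, hcover⟩ := hB.elim_finite_subcover (fun u : B => {x | 0 < f u x})
    (fun u => isOpen_lt continuous_const (f u).continuous)
    fun u hu => mem_iUnion.2 ⟨⟨u, hu⟩, hfu u hu⟩
  set l := ∑ u ∈ t, f u
  have hlB : ∀ x ∈ B, 0 < l x := by
    intro x hx
    obtain ⟨u, hut, hxu⟩ := mem_iUnion₂.1 (hcover hx)
    simpa [l] using Finset.sum_pos' (f := fun v : B => f v x) (fun v _ => hfK v v.2 x hx.1)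
      ⟨u, hut, hxu⟩
  obtain ⟨δ, hδ, hδB⟩ := hB.exists_forall_le' l.continuous.continuousOn hlB
  refine ⟨l, δ, hδ, fun u hu => ?_⟩
  rcases eq_or_ne u 0 with rfl | hu0
  · simp
  have hnorm : 0 < ‖u‖ := norm_pos_iff.2 hu0
  have := hδB _ ⟨hKcone _ (inv_nonneg.2 hnorm.le) u hu, by simp [norm_smul, hnorm.ne']⟩
  rwa [map_smul, smul_eq_mul, le_inv_mul_iff₀ hnorm, mul_comm] at this

theorem exists_pos_on_nonpos_on_of_inter_subset {M : Set E}
    (hMcone : ∀ t : ℝ, 0 ≤ t → ∀ x ∈ M, t • x ∈ M) (hMclosed : IsClosed M)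
    (hMconvex : Convex ℝ M) (hM0 : (0 : E) ∈ M) (hKM : ∀ x ∈ K, x ∈ M → x = 0) :
    ∃ f : StrongDual ℝ E, (∀ x ∈ M, f x ≤ 0) ∧ ∀ u ∈ K, u ≠ 0 → 0 < f u := by
  obtain ⟨l, δ, hδ, hl⟩ := exists_mul_norm_le_apply_of_pointed hKcone hKclosed hKconvex hKpointed
  -- `l` cuts out a compact convex base of `K`, which can be strictly separated from `M`
  set C := K ∩ {u | l u = 1}
  have hCcompact : IsCompact C := by
    refine Metric.isCompact_of_isClosed_isBounded
      (hKclosed.inter (isClosed_eq l.continuous continuous_const))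
      ((Metric.isBounded_closedBall (x := 0) (r := δ⁻¹)).subset fun u hu => ?_)
    rw [mem_closedBall_zero_iff, ← mul_one δ⁻¹, ← show l u = 1 from hu.2]
    exact (le_inv_mul_iff₀ hδ).2 (hl u hu.1)
  have hCconvex : Convex ℝ C := hKconvex.inter (convex_hyperplane l.isLinear 1)
  have hCM : Disjoint C M := disjoint_left.2 fun u hu huM => by
    simpa [hKM u hu.1 huM] using hu.2
  obtain ⟨f, a, b, hfC, hab, hfM⟩ :=
    geometric_hahn_banach_compact_closed hCconvex hCcompact hMconvex hMclosed hCM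
  have hb : b < 0 := by simpa using hfM 0 hM0
  refine ⟨-f, fun x hx => ?_, fun u hu hu0 => ?_⟩
  · simpa using nonneg_apply_of_lt_apply_of_smul_mem hMcone hfM hx
  · have hlu : 0 < l u := (mul_pos hδ (norm_pos_iff.2 hu0)).trans_le (hl u hu)
    have := hfC _ ⟨hKcone _ (inv_nonneg.2 hlu.le) u hu, by simp [hlu.ne']⟩
    rw [map_smul, smul_eq_mul] at this
    simpa using neg_of_mul_neg_right (this.trans (hab.trans hb)) (inv_nonneg.2 hlu.le)

end Separation

lemma Matrix.transpose_mulVec_dotProduct {m n R : Type*} [Fintype m] [Fintype n]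
    [CommSemiring R] (A : Matrix m n R) (y : m → R) (x : n → R) :
    (Aᵀ *ᵥ y) ⬝ᵥ x = y ⬝ᵥ (A *ᵥ x) := by
  rw [dotProduct_mulVec, mulVec_transpose]

lemma Matrix.exists_transpose_mulVec_eq {m n 𝕜 : Type*} [Fintype m] [DecidableEq m] [Field 𝕜]
    {l : m → 𝕜} (hl : l ≠ 0) (y : n → 𝕜) : ∃ U : Matrix m n 𝕜, Uᵀ *ᵥ l = y := by
  obtain ⟨i, hi⟩ := Function.ne_iff.mp hl
  refine ⟨vecMulVec (Pi.single i (l i)⁻¹) y, ?_⟩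
  rw [transpose_vecMulVec, vecMulVec_mulVec, single_dotProduct, inv_mul_cancel₀ hi,
    MulOpposite.op_one, one_smul]

lemma exists_dotProduct_add_dotProduct_eq {m n R : Type*} [Fintype m] [Fintype n]
    [CommSemiring R] (f : Module.Dual R ((m → R) × (n → R))) :
    ∃ (l : m → R) (ν : n → R), ∀ z w, f (z, w) = l ⬝ᵥ z + ν ⬝ᵥ w := by
  classical
  refine ⟨(dotProductEquiv R m).symm (f ∘ₗ .inl R _ _),
    (dotProductEquiv R n).symm (f ∘ₗ .inr R _ _), fun z w => ?_⟩
  have hz := LinearMap.congr_fun ((dotProductEquiv R m).apply_symm_apply (f ∘ₗ .inl R _ _)) z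
  have hw := LinearMap.congr_fun ((dotProductEquiv R n).apply_symm_apply (f ∘ₗ .inr R _ _)) w
  simp only [dotProductEquiv_apply_apply, LinearMap.comp_apply, LinearMap.inl_apply,
    LinearMap.inr_apply] at hz hw
  rw [hz, hw, ← map_add, Prod.mk_add_mk, add_zero, zero_add]

variable {ι κ μ : Type*} [Fintype κ] [Fintype μ]

def IsEfficient [Fintype ι] (K : Set (κ → ℝ)) (L : Matrix κ ι ℝ) (S : Set (ι → ℝ))
    (xbar : ι → ℝ) : Prop :=
  xbar ∈ S ∧ ¬ ∃ x ∈ S, L *ᵥ xbar - L *ᵥ x ∈ K ∧ L *ᵥ xbar - L *ᵥ x ≠ 0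

theorem exists_isEfficient_of_multiplier [Fintype ι] {K : Set (κ → ℝ)} {L : Matrix κ ι ℝ}
    {A : Matrix μ ι ℝ} {b : μ → ℝ} {l : κ → ℝ} {U : Matrix κ μ ℝ}
    (hfeas : ∃ x, 0 ≤ x ∧ A *ᵥ x = b) (hl : ∀ u ∈ K, u ≠ 0 → 0 < l ⬝ᵥ u)
    (hU : 0 ≤ (L - U * A)ᵀ *ᵥ l) :
    ∃ xbar, IsEfficient K L {x | 0 ≤ x ∧ A *ᵥ x = b} xbar := by
  have hweak (x : ι → ℝ) :
      (Lᵀ *ᵥ l) ⬝ᵥ x = ((L - U * A)ᵀ *ᵥ l) ⬝ᵥ x + (Uᵀ *ᵥ l) ⬝ᵥ (A *ᵥ x) := by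
    rw [transpose_mulVec_dotProduct, transpose_mulVec_dotProduct, transpose_mulVec_dotProduct,
      sub_mulVec, dotProduct_sub, mulVec_mulVec, sub_add_cancel]
  obtain ⟨xbar, hxbar, hmin⟩ := exists_forall_dotProduct_le_of_bddBelow A b (Lᵀ *ᵥ l) hfeas
    ⟨(Uᵀ *ᵥ l) ⬝ᵥ b, fun x hx₀ hx => by
      rw [hweak, hx]; linarith [dotProduct_nonneg_of_nonneg hU hx₀]⟩
  refine ⟨xbar, hxbar, fun ⟨x, hx, hxK, hx0⟩ => ?_⟩
  have := hl _ hxK hx0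
  rw [dotProduct_sub, ← transpose_mulVec_dotProduct, ← transpose_mulVec_dotProduct] at this
  linarith [hmin x hx.1 hx.2]

theorem exists_dual_feasible_of_isEfficient [Fintype ι] {K : Set (κ → ℝ)}
    (hKcone : ∀ t : ℝ, 0 ≤ t → ∀ x ∈ K, t • x ∈ K) (hKclosed : IsClosed K)
    (hKconvex : Convex ℝ K) (hKpointed : ∀ u ∈ K, -u ∈ K → u = 0)
    {L : Matrix κ ι ℝ} {A : Matrix μ ι ℝ} {b : μ → ℝ} {xbar : ι → ℝ}
    (hxbar : IsEfficient K L {x | 0 ≤ x ∧ A *ᵥ x = b} xbar) :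
    ∃ (l : κ → ℝ) (ν : μ → ℝ), (∀ u ∈ K, u ≠ 0 → 0 < l ⬝ᵥ u) ∧ 0 ≤ Lᵀ *ᵥ l + Aᵀ *ᵥ ν := by
  classical
  set g : (ι → ℝ) →ₗ[ℝ] (κ → ℝ) × (μ → ℝ) := -(L.mulVecLin.prod A.mulVecLin)
  have hKM : ∀ p ∈ K ×ˢ {0}, p ∈ g '' {x | 0 ≤ x} → p = 0 := by
    rintro _ ⟨hu, hw⟩ ⟨x, hx, rfl⟩
    have hAx : A *ᵥ x = 0 := by simpa [g] using hw
    have hdiff : L *ᵥ xbar - L *ᵥ (xbar + x) = -(L *ᵥ x) := by rw [mulVec_add]; abel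
    have hfeas : xbar + x ∈ {x | 0 ≤ x ∧ A *ᵥ x = b} :=
      ⟨add_nonneg hxbar.1.1 hx, by rw [mulVec_add, hxbar.1.2, hAx, add_zero]⟩
    have hLx : L *ᵥ x = 0 := neg_eq_zero.1 <| by_contra fun hne =>
      hxbar.2 ⟨_, hfeas, hdiff ▸ by simpa [g] using hu, hdiff ▸ hne⟩
    simp [g, Prod.ext_iff, hAx, hLx]
  obtain ⟨f, hfM, hfK⟩ := exists_pos_on_nonpos_on_of_inter_subset (K := K ×ˢ {(0 : μ → ℝ)})
    (fun t ht p hp => ⟨hKcone t ht _ hp.1, by simp [show p.2 = 0 from hp.2]⟩)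
    (hKclosed.prod isClosed_singleton) (hKconvex.prod (convex_singleton 0))
    (fun p hp hnp => Prod.ext (hKpointed _ hp.1 hnp.1) hp.2)
    (by rintro t ht _ ⟨x, hx, rfl⟩
        exact ⟨t • x, (smul_nonneg ht (hx : 0 ≤ x) : 0 ≤ t • x), map_smul g t x⟩)
    (isClosed_image_nonneg g) ((convex_Ici 0).linear_image g)
    ⟨0, le_refl (0 : ι → ℝ), map_zero g⟩ hKM
  obtain ⟨l, ν, hf⟩ := exists_dotProduct_add_dotProduct_eq f.toLinearMap
  simp only [ContinuousLinearMap.coe_coe] at hf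
  have hfg (x : ι → ℝ) : f (g x) = -((Lᵀ *ᵥ l + Aᵀ *ᵥ ν) ⬝ᵥ x) := by
    simp [g, hf, add_dotProduct, transpose_mulVec_dotProduct, add_comm]
  refine ⟨l, ν, fun u hu hu0 => ?_, fun i => ?_⟩
  · simpa [hf] using hfK (u, 0) ⟨hu, rfl⟩ (by simpa using hu0)
  · have := hfM _ ⟨Pi.single i 1, Pi.single_nonneg.2 zero_le_one, rfl⟩
    rwa [hfg, dotProduct_single_one, neg_nonpos] at this

theorem exists_nonneg_transpose_sub_mul_mulVec {L : Matrix κ ι ℝ} {A : Matrix μ ι ℝ}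
    {l : κ → ℝ} {ν : μ → ℝ} (h : 0 ≤ Lᵀ *ᵥ l + Aᵀ *ᵥ ν) :
    ∃ U : Matrix κ μ ℝ, 0 ≤ (L - U * A)ᵀ *ᵥ l := by
  classical
  rcases eq_or_ne l 0 with rfl | hl0
  · exact ⟨0, by simp⟩
  obtain ⟨U, hU⟩ := exists_transpose_mulVec_eq hl0 (-ν)
  refine ⟨U, ?_⟩
  rwa [transpose_sub, sub_mulVec, transpose_mul, ← mulVec_mulVec, hU, mulVec_neg, sub_neg_eq_add]

theorem stmt7_general (k n m : ℕ) (K : Set (Fin k → ℝ))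
    (hKcone : ∀ (c : ℝ), 0 ≤ c → ∀ x ∈ K, c • x ∈ K)
    (hKclosed : IsClosed K) (hKconvex : Convex ℝ K)
    (hKpointed : K ∩ (-K) = {0})
    (L : Matrix (Fin k) (Fin n) ℝ) (A : Matrix (Fin m) (Fin n) ℝ) (b : Fin m → ℝ)
    (hA : ∃ x : Fin n → ℝ, (∀ i, 0 ≤ x i) ∧ A *ᵥ x = b) :
    (¬ ∃ xbar : Fin n → ℝ, ((∀ i, 0 ≤ xbar i) ∧ A *ᵥ xbar = b) ∧
      ¬ ∃ x : Fin n → ℝ, ((∀ i, 0 ≤ x i) ∧ A *ᵥ x = b) ∧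
        L *ᵥ xbar - L *ᵥ x ∈ K ∧ L *ᵥ xbar - L *ᵥ x ≠ 0)
    ↔ ¬ ∃ (l : Fin k → ℝ) (U : Matrix (Fin k) (Fin m) ℝ) (v : Fin k → ℝ),
        (∀ u ∈ K, u ≠ 0 → 0 < l ⬝ᵥ u) ∧ l ⬝ᵥ v = 0 ∧
        ∀ i, 0 ≤ ((L - U * A)ᵀ *ᵥ l) i := by
  have hpointed : ∀ u ∈ K, -u ∈ K → u = 0 := fun u hu hnu => by
    simpa using hKpointed.subset ⟨hu, hnu⟩
  refine not_congr ⟨fun ⟨xbar, hxbar⟩ => ?_,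
    fun ⟨l, U, _, hl, _, hU⟩ => exists_isEfficient_of_multiplier hA hl hU⟩
  obtain ⟨l, ν, hl, hν⟩ :=
    exists_dual_feasible_of_isEfficient hKcone hKclosed hKconvex hpointed hxbar
  obtain ⟨U, hU⟩ := exists_nonneg_transpose_sub_mul_mulVec hν
  exact ⟨l, U, 0, hl, dotProduct_zero l, hU⟩

theorem stmt7 (k n m : ℕ) (K : Set (Fin k → ℝ))
    (hKcone : ∀ (c : ℝ), 0 ≤ c → ∀ x ∈ K, c • x ∈ K)
    (hKclosed : IsClosed K) (hKconvex : Convex ℝ K)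
    (hKpointed : K ∩ (-K) = {0})
    (hKne : K ≠ {0}) (hKuniv : K ≠ Set.univ)
    (L : Matrix (Fin k) (Fin n) ℝ) (A : Matrix (Fin m) (Fin n) ℝ) (b : Fin m → ℝ)
    (hA : ∃ x : Fin n → ℝ, (∀ i, 0 ≤ x i) ∧ A *ᵥ x = b) :
    (¬ ∃ xbar : Fin n → ℝ, ((∀ i, 0 ≤ xbar i) ∧ A *ᵥ xbar = b) ∧
      ¬ ∃ x : Fin n → ℝ, ((∀ i, 0 ≤ x i) ∧ A *ᵥ x = b) ∧
        L *ᵥ xbar - L *ᵥ x ∈ K ∧ L *ᵥ xbar - L *ᵥ x ≠ 0)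
    ↔ ¬ ∃ (l : Fin k → ℝ) (U : Matrix (Fin k) (Fin m) ℝ) (v : Fin k → ℝ),
        (∀ u ∈ K, u ≠ 0 → 0 < l ⬝ᵥ u) ∧ l ⬝ᵥ v = 0 ∧
        ∀ i, 0 ≤ ((L - U * A)ᵀ *ᵥ l) i :=
  stmt7_general k n m K hKcone hKclosed hKconvex hKpointed L A b hA
end

section
/- If ℬ = {(λ, U, v) ∈ K*⁰ × ℝ^{k×m} × ℝ^k : λᵀv = 0, (L − UA)ᵀλ ∈ ℝ^n_+} is nonempty, then the dual problem of maximizing Ub + v over ℬ with respect to K has no efficient (maximal) solutions if and only if 𝒜 = {x ∈ ℝ^n_+ : Ax = b} is empty. -/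
/-!
If `𝒜 = ∅`, Farkas' lemma gives `y` with `yᵀA ≤ 0 < yᵀb`. Adding the rank-one matrix `u yᵀ`
(`u ∈ K \ {0}`) to `U` keeps any `(λ, U, v) ∈ ℬ` in `ℬ` and raises `Ub + v` by `(yᵀb) u ∈ K \ {0}`,
so no element of `ℬ` is maximal.

If `x ∈ 𝒜`, then `λᵀ(Ub + v) ≤ λᵀLx` for every `(λ, U, v) ∈ ℬ` (weak duality), so nothing in `ℬ`
dominates `Lx`. Given `(λ₀, U₀, v₀) ∈ ℬ`, strong LP duality for `min (Lᵀλ₀)ᵀx` over `𝒜` (whose dual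
is feasible thanks to `U₀ᵀλ₀`) yields an optimal `x` and a dual optimum `w`; any `Ū` with
`Ūᵀλ₀ = w` together with `v̄ = Lx - Ūb` is then an element of `ℬ` with value `Lx`, hence maximal.
-/

open Matrix Finset

lemma exists_nonneg_sum_insert_eq {R M ι : Type*} [Semiring R] [PartialOrder R]
    [AddCommMonoid M] [Module R M] [DecidableEq ι] {s : Finset ι} {j : ι} (hj : j ∉ s)
    {a : ι → M} {d : M} {z : ι → R} {t : R} (hz : 0 ≤ z) (ht : 0 ≤ t)
    (h : t • a j + ∑ i ∈ s, z i • a i = d) :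
    ∃ z' : ι → R, 0 ≤ z' ∧ ∑ i ∈ insert j s, z' i • a i = d := by
  refine ⟨Function.update z j t, le_update_iff.mpr ⟨ht, fun i _ => hz i⟩, ?_⟩
  rw [sum_insert hj, Function.update_self, ← h]
  congr 1
  exact sum_congr rfl fun i hi => by rw [Function.update_of_ne (ne_of_mem_of_not_mem hi hj)]

section Farkas

variable {𝕜 ι α : Type*} [Field 𝕜] [Fintype α]

def obliqueProj (p y : α → 𝕜) : (α → 𝕜) →ₗ[𝕜] α → 𝕜 where
  toFun v := v - (y ⬝ᵥ v / (y ⬝ᵥ p)) • p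
  map_add' v w := by simp only [dotProduct_add, add_div, add_smul]; abel
  map_smul' r v := by
    simp only [dotProduct_smul, smul_eq_mul, mul_div_assoc, smul_sub, smul_smul, RingHom.id_apply]

lemma obliqueProj_apply (p y v : α → 𝕜) : obliqueProj p y v = v - (y ⬝ᵥ v / (y ⬝ᵥ p)) • p :=
  rfl

lemma dotProduct_obliqueProj (p y v w : α → 𝕜) :
    w ⬝ᵥ obliqueProj p y v = obliqueProj y p w ⬝ᵥ v := by
  simp only [obliqueProj_apply, dotProduct_sub, sub_dotProduct, dotProduct_smul, smul_dotProduct,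
    smul_eq_mul]
  rw [dotProduct_comm p y, dotProduct_comm p w]
  ring

lemma dotProduct_obliqueProj_self {p y : α → 𝕜} (h : p ⬝ᵥ y ≠ 0) (w : α → 𝕜) :
    p ⬝ᵥ obliqueProj y p w = 0 := by
  rw [obliqueProj_apply, dotProduct_sub, dotProduct_smul, smul_eq_mul, div_mul_cancel₀ _ h,
    sub_self]

lemma eq_smul_of_obliqueProj_eq_zero {p y v : α → 𝕜} (h : obliqueProj p y v = 0) :
    v = (y ⬝ᵥ v / (y ⬝ᵥ p)) • p :=
  sub_eq_zero.mp h

variable [LinearOrder 𝕜] [IsStrictOrderedRing 𝕜]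

theorem exists_nonneg_sum_eq_or_exists_dotProduct_pos (s : Finset ι) (a : ι → α → 𝕜)
    (d : α → 𝕜) :
    (∃ z : ι → 𝕜, 0 ≤ z ∧ ∑ i ∈ s, z i • a i = d) ∨
      ∃ y, (∀ i ∈ s, y ⬝ᵥ a i ≤ 0) ∧ 0 < y ⬝ᵥ d := by
  classical
  induction s using Finset.induction_on generalizing a d with
  | empty =>
    by_cases hd : d = 0
    · exact .inl ⟨0, le_rfl, by simp [hd]⟩
    · refine .inr ⟨d, by simp, ?_⟩
      exact lt_of_le_of_ne (Finset.sum_nonneg fun i _ => mul_self_nonneg _)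
        (Ne.symm (dotProduct_self_eq_zero.not.mpr hd))
  | insert j s hj ih =>
    rcases ih a d with ⟨z, hz, hzd⟩ | ⟨y, hy, hyd⟩
    · exact .inl (exists_nonneg_sum_insert_eq hj hz le_rfl (by rw [zero_smul, zero_add, hzd]))
    rcases le_or_gt (y ⬝ᵥ a j) 0 with hyj | hyj
    · exact .inr ⟨y, forall_mem_insert _ _ _ |>.mpr ⟨hyj, hy⟩, hyd⟩
    -- Project everything onto `y⊥` along `a j` and use the induction hypothesis there.
    rcases ih (fun i => obliqueProj (a j) y (a i)) (obliqueProj (a j) y d) with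
      ⟨z, hz, hzd⟩ | ⟨y', hy', hyd'⟩
    · set r := d - ∑ i ∈ s, z i • a i
      have hr : r = (y ⬝ᵥ r / (y ⬝ᵥ a j)) • a j := by
        refine eq_smul_of_obliqueProj_eq_zero ?_
        simp only [r, map_sub, map_sum, map_smul, hzd, sub_self]
      have hyr : 0 < y ⬝ᵥ r := by
        have : ∑ i ∈ s, z i * (y ⬝ᵥ a i) ≤ 0 :=
          sum_nonpos fun i hi => mul_nonpos_of_nonneg_of_nonpos (hz i) (hy i hi)
        simp only [r, dotProduct_sub, dotProduct_sum, dotProduct_smul, smul_eq_mul]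
        linarith
      refine .inl (exists_nonneg_sum_insert_eq hj hz (div_pos hyr hyj).le ?_)
      rw [← hr, sub_add_cancel]
    · have hyj' : a j ⬝ᵥ y ≠ 0 := by rw [dotProduct_comm]; exact hyj.ne'
      refine .inr ⟨obliqueProj y (a j) y', forall_mem_insert _ _ _ |>.mpr ⟨?_, fun i hi => ?_⟩, ?_⟩
      · rw [dotProduct_comm, dotProduct_obliqueProj_self hyj']
      · rw [← dotProduct_obliqueProj]; exact hy' i hi
      · rw [← dotProduct_obliqueProj]; exact hyd'

theorem exists_nonneg_mulVec_eq_or_exists_vecMul_nonpos [Fintype ι] (M : Matrix α ι 𝕜)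
    (d : α → 𝕜) :
    (∃ z, 0 ≤ z ∧ M *ᵥ z = d) ∨ ∃ y, y ᵥ* M ≤ 0 ∧ 0 < y ⬝ᵥ d := by
  rcases exists_nonneg_sum_eq_or_exists_dotProduct_pos univ (fun i => Mᵀ i) d with
    ⟨z, hz, hzd⟩ | ⟨y, hy, hyd⟩
  · refine .inl ⟨z, hz, ?_⟩
    rw [← hzd]
    ext r
    simp [mulVec, dotProduct, Finset.sum_apply, mul_comm]
  · exact .inr ⟨y, fun i => hy i (mem_univ i), hyd⟩

theorem exists_nonneg_mulVec_add_mulVec_eq_or_exists_vecMul_nonpos [Fintype ι] {κ : Type*}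
    [Fintype κ] (M : Matrix α ι 𝕜) (N : Matrix α κ 𝕜) (d : α → 𝕜) :
    (∃ z w, 0 ≤ z ∧ M *ᵥ z + N *ᵥ w = d) ∨
      ∃ y, y ᵥ* M ≤ 0 ∧ y ᵥ* N = 0 ∧ 0 < y ⬝ᵥ d := by
  rcases exists_nonneg_mulVec_eq_or_exists_vecMul_nonpos (fromCols M (fromCols N (-N))) d with
    ⟨z, hz, hzd⟩ | ⟨y, hy, hyd⟩
  · refine .inl ⟨z ∘ Sum.inl, z ∘ Sum.inr ∘ Sum.inl - z ∘ Sum.inr ∘ Sum.inr,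
      fun i => hz _, ?_⟩
    rw [← hzd]
    simp [neg_mulVec, sub_eq_add_neg, mulVec_add, mulVec_neg, Function.comp_def]
  · simp only [vecMul_fromCols, vecMul_neg, ← Sum.elim_zero_zero, Sum.elim_le_elim_iff,
      neg_nonpos] at hy
    exact .inr ⟨y, hy.1, le_antisymm hy.2.1 hy.2.2, hyd⟩

end Farkas

section Matrix

variable {R k m n : Type*} [CommRing R]

lemma const_vecMul_replicateRow (t : R) (c : n → R) :
    (fun _ : Unit => t) ᵥ* replicateRow Unit c = t • c := by
  ext; simp [vecMul, dotProduct]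

lemma transpose_sub_mul_mulVec [Fintype k] [Fintype m] (L : Matrix k n R) (U : Matrix k m R)
    (A : Matrix m n R) (l : k → R) : (L - U * A)ᵀ *ᵥ l = l ᵥ* L - (l ᵥ* U) ᵥ* A := by
  rw [mulVec_transpose, vecMul_sub, vecMul_vecMul]

lemma add_vecMulVec_mulVec_add_sub [Fintype m] (U : Matrix k m R) (u : k → R) (y b : m → R)
    (v : k → R) : (U + vecMulVec u y) *ᵥ b + v - (U *ᵥ b + v) = (y ⬝ᵥ b) • u := by
  rw [add_mulVec, vecMulVec_mulVec]
  ext i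
  simp [mul_comm]

end Matrix

section LinearProgramming

variable {𝕜 m n : Type*} [Field 𝕜] [LinearOrder 𝕜] [IsStrictOrderedRing 𝕜] [Fintype m]
  [Fintype n] {A : Matrix m n 𝕜} {b : m → 𝕜} {c : n → 𝕜}

theorem mul_dotProduct_le_mul_dotProduct {x : n → 𝕜} {w : m → 𝕜} {τ : 𝕜} (hx : 0 ≤ x)
    (hAx : A *ᵥ x = τ • b) (hw : w ᵥ* A ≤ τ • c) : τ * (w ⬝ᵥ b) ≤ τ * (c ⬝ᵥ x) :=
  calc τ * (w ⬝ᵥ b) = w ⬝ᵥ A *ᵥ x := by rw [hAx, dotProduct_smul, smul_eq_mul]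
    _ = (w ᵥ* A) ⬝ᵥ x := dotProduct_mulVec ..
    _ ≤ (τ • c) ⬝ᵥ x := dotProduct_le_dotProduct_of_nonneg_right hw hx
    _ = τ * (c ⬝ᵥ x) := by rw [smul_dotProduct, smul_eq_mul]

theorem dotProduct_le_dotProduct_of_feasible {x : n → 𝕜} {w : m → 𝕜} (hx : 0 ≤ x)
    (hAx : A *ᵥ x = b) (hw : w ᵥ* A ≤ c) : w ⬝ᵥ b ≤ c ⬝ᵥ x := by
  simpa using mul_dotProduct_le_mul_dotProduct (τ := 1) hx (by rwa [one_smul]) (by rwa [one_smul])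

theorem dotProduct_le_dotProduct_of_mulVec_eq_smul {x₀ x : n → 𝕜} {w₀ w : m → 𝕜} {τ : 𝕜}
    (hx₀ : 0 ≤ x₀) (hAx₀ : A *ᵥ x₀ = b) (hw₀ : w₀ ᵥ* A ≤ c) (hτ : 0 ≤ τ) (hx : 0 ≤ x)
    (hAx : A *ᵥ x = τ • b) (hw : w ᵥ* A ≤ τ • c) : w ⬝ᵥ b ≤ c ⬝ᵥ x := by
  rcases hτ.lt_or_eq with hτ | rfl
  · exact le_of_mul_le_mul_left (mul_dotProduct_le_mul_dotProduct hx hAx hw) hτ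
  · rw [zero_smul] at hAx hw
    calc w ⬝ᵥ b ≤ 0 ⬝ᵥ x₀ := dotProduct_le_dotProduct_of_feasible hx₀ hAx₀ hw
      _ = w₀ ⬝ᵥ 0 := by simp
      _ ≤ c ⬝ᵥ x := dotProduct_le_dotProduct_of_feasible hx hAx hw₀

theorem exists_feasible_le_or_exists_homogeneous (A : Matrix m n 𝕜) (b : m → 𝕜) (c : n → 𝕜) :
    (∃ x w, 0 ≤ x ∧ A *ᵥ x = b ∧ w ᵥ* A ≤ c ∧ c ⬝ᵥ x ≤ w ⬝ᵥ b) ∨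
      ∃ x w, ∃ τ : 𝕜, 0 ≤ τ ∧ 0 ≤ x ∧ A *ᵥ x = τ • b ∧ w ᵥ* A ≤ τ • c ∧ c ⬝ᵥ x < w ⬝ᵥ b := by
  classical
  -- Variables `(x, s, σ) ≥ 0` and `w` free; rows `A x = b`, `s + wA = c`, `c·x + σ - w·b = 0`.
  rcases exists_nonneg_mulVec_add_mulVec_eq_or_exists_vecMul_nonpos
      (fromBlocks A 0 (fromRows 0 (replicateRow Unit c)) (1 : Matrix (n ⊕ Unit) (n ⊕ Unit) 𝕜))
      (fromRows 0 (fromRows Aᵀ (replicateRow Unit (-b)))) (Sum.elim b (Sum.elim c 0)) with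
    ⟨z, w, hz, h⟩ | ⟨y, hy, hy', hyd⟩
  · obtain ⟨x, s, σ, rfl⟩ : ∃ x s σ, z = Sum.elim x (Sum.elim s fun _ => σ) :=
      ⟨z ∘ Sum.inl, z ∘ Sum.inr ∘ Sum.inl, z (.inr (.inr ())), by ext (_ | _ | _) <;> rfl⟩
    simp only [Pi.le_def, Pi.zero_apply, Sum.forall, Sum.elim_inl, Sum.elim_inr, forall_const,
      fromBlocks_mulVec, Sum.elim_comp_inl, Sum.elim_comp_inr, zero_mulVec, add_zero,
      fromRows_mulVec, replicateRow_mulVec_eq_const, one_mulVec, mulVec_transpose, neg_dotProduct,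
      funext_iff, Pi.add_apply, zero_add, Function.const_apply] at hz h
    obtain ⟨hx, hs, hσ⟩ := hz
    obtain ⟨hAx, hc, hgap⟩ := h
    refine .inl ⟨x, w, hx, funext hAx, fun j => ?_, ?_⟩
    · linarith [hc j, hs j]
    · linarith [dotProduct_comm b w]
  · obtain ⟨u, v, t, rfl⟩ : ∃ u v t, y = Sum.elim u (Sum.elim v fun _ => t) :=
      ⟨y ∘ Sum.inl, y ∘ Sum.inr ∘ Sum.inl, y (.inr (.inr ())), by ext (_ | _ | _) <;> rfl⟩
    simp only [vecMul_fromBlocks, Sum.elim_comp_inl, Sum.elim_comp_inr, vecMul_fromRows,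
      vecMul_zero, const_vecMul_replicateRow, zero_add, vecMul_one, Pi.le_def, Pi.zero_apply,
      Sum.forall, Sum.elim_inl, Pi.add_apply, Pi.smul_apply, smul_eq_mul, Sum.elim_inr,
      forall_const, vecMul_transpose, smul_neg, funext_iff, Pi.neg_apply,
      sumElim_dotProduct_sumElim, dotProduct_zero, add_zero] at hy hy' hyd
    obtain ⟨huA, hv, ht⟩ := hy
    refine .inr ⟨-v, u, -t, neg_nonneg.mpr ht, fun j => neg_nonneg.mpr (hv j), ?_, fun j => ?_,
      ?_⟩
    · ext i
      simp only [mulVec_neg, Pi.neg_apply, Pi.smul_apply, smul_eq_mul, neg_mul, neg_inj]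
      linarith [hy' i]
    · simp only [Pi.smul_apply, smul_eq_mul, neg_mul]
      linarith [huA j]
    · rw [dotProduct_neg, dotProduct_comm]; linarith

theorem exists_optimal_of_feasible {x₀ : n → 𝕜} {w₀ : m → 𝕜} (hx₀ : 0 ≤ x₀) (hAx₀ : A *ᵥ x₀ = b)
    (hw₀ : w₀ ᵥ* A ≤ c) :
    ∃ x w, 0 ≤ x ∧ A *ᵥ x = b ∧ w ᵥ* A ≤ c ∧ c ⬝ᵥ x = w ⬝ᵥ b := by
  rcases exists_feasible_le_or_exists_homogeneous A b c with
    ⟨x, w, hx, hAx, hw, hgap⟩ | ⟨x, w, τ, hτ, hx, hAx, hw, hlt⟩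
  · exact ⟨x, w, hx, hAx, hw, hgap.antisymm (dotProduct_le_dotProduct_of_feasible hx hAx hw)⟩
  · exact absurd hlt
      (dotProduct_le_dotProduct_of_mulVec_eq_smul hx₀ hAx₀ hw₀ hτ hx hAx hw).not_gt

end LinearProgramming

section VectorDuality

variable {𝕜 k m n : Type*} [Field 𝕜] [LinearOrder 𝕜] [IsStrictOrderedRing 𝕜] [Fintype k]
  [Fintype m] {K : Set (k → 𝕜)} {L : Matrix k n 𝕜} {A : Matrix m n 𝕜} {b : m → 𝕜}

/-- `(l, U, v) ∈ ℬ`, the feasible set of the dual vector problem. -/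
structure IsDualFeasible (K : Set (k → 𝕜)) (L : Matrix k n 𝕜) (A : Matrix m n 𝕜) (l : k → 𝕜)
    (U : Matrix k m 𝕜) (v : k → 𝕜) : Prop where
  pos : ∀ u ∈ K, u ≠ 0 → 0 < l ⬝ᵥ u
  orth : l ⬝ᵥ v = 0
  nonneg : 0 ≤ (L - U * A)ᵀ *ᵥ l

variable {l : k → 𝕜} {U : Matrix k m 𝕜} {v : k → 𝕜}

lemma IsDualFeasible.dotProduct_sub_mulVec_nonpos [Fintype n] (h : IsDualFeasible K L A l U v)
    {x : n → 𝕜} (hx : 0 ≤ x) (hAx : A *ᵥ x = b) :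
    l ⬝ᵥ (U *ᵥ b + v - L *ᵥ x) ≤ 0 := by
  have : l ⬝ᵥ (U *ᵥ b + v - L *ᵥ x) = -((L - U * A)ᵀ *ᵥ l ⬝ᵥ x) := by
    rw [transpose_sub_mul_mulVec, ← hAx, dotProduct_sub, dotProduct_add, h.orth, add_zero,
      sub_dotProduct]
    simp only [dotProduct_mulVec]
    ring
  rw [this, neg_nonpos]
  exact dotProduct_nonneg_of_nonneg h.nonneg hx

lemma IsDualFeasible.eq_zero_of_sub_mem [Fintype n] (h : IsDualFeasible K L A l U v)
    {x : n → 𝕜} (hx : 0 ≤ x) (hAx : A *ᵥ x = b) (hK : U *ᵥ b + v - L *ᵥ x ∈ K) :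
    U *ᵥ b + v - L *ᵥ x = 0 := by
  by_contra hne
  exact (h.pos _ hK hne).not_ge (h.dotProduct_sub_mulVec_nonpos hx hAx)

lemma IsDualFeasible.add_vecMulVec (h : IsDualFeasible K L A l U v) {u : k → 𝕜}
    (hu : 0 ≤ l ⬝ᵥ u) {y : m → 𝕜} (hy : y ᵥ* A ≤ 0) :
    IsDualFeasible K L A l (U + vecMulVec u y) v where
  pos := h.pos
  orth := h.orth
  nonneg := by
    rw [transpose_sub_mul_mulVec, vecMul_add, vecMul_vecMulVec, add_vecMul, smul_vecMul,
      ← sub_sub, ← transpose_sub_mul_mulVec]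
    exact sub_nonneg.mpr ((smul_nonpos_of_nonneg_of_nonpos hu hy).trans h.nonneg)

lemma IsDualFeasible.exists_eq_mulVec [Fintype n] (h : IsDualFeasible K L A l U v) (hl : l ≠ 0)
    {x₀ : n → 𝕜} (hx₀ : 0 ≤ x₀) (hAx₀ : A *ᵥ x₀ = b) :
    ∃ x Ubar vbar, 0 ≤ x ∧ A *ᵥ x = b ∧ IsDualFeasible K L A l Ubar vbar ∧
      Ubar *ᵥ b + vbar = L *ᵥ x := by
  have hw₀ : (l ᵥ* U) ᵥ* A ≤ l ᵥ* L := by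
    simpa only [transpose_sub_mul_mulVec, sub_nonneg] using h.nonneg
  obtain ⟨x, w, hx, hAx, hw, hcw⟩ := exists_optimal_of_feasible hx₀ hAx₀ hw₀
  set Ubar := (l ⬝ᵥ l)⁻¹ • vecMulVec l w
  have hlUbar : l ᵥ* Ubar = w := by
    rw [vecMul_smul, vecMul_vecMulVec, smul_smul,
      inv_mul_cancel₀ (dotProduct_self_eq_zero.not.mpr hl), one_smul]
  refine ⟨x, Ubar, L *ᵥ x - Ubar *ᵥ b, hx, hAx, ⟨h.pos, ?_, ?_⟩, add_sub_cancel _ _⟩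
  · rw [dotProduct_sub, dotProduct_mulVec, dotProduct_mulVec, hlUbar, hcw, sub_self]
  · rw [transpose_sub_mul_mulVec, hlUbar]
    exact sub_nonneg.mpr hw

end VectorDuality

theorem stmt8_general (k n m : ℕ) (K : Set (Fin k → ℝ))
    (hKcone : ∀ (c : ℝ), 0 ≤ c → ∀ x ∈ K, c • x ∈ K)
    (hKpointed : K ∩ (-K) = {0})
    (hKne : K ≠ {0})
    (L : Matrix (Fin k) (Fin n) ℝ) (A : Matrix (Fin m) (Fin n) ℝ) (b : Fin m → ℝ)
    (hB : ∃ (l : Fin k → ℝ) (U : Matrix (Fin k) (Fin m) ℝ) (v : Fin k → ℝ),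
      (∀ u ∈ K, u ≠ 0 → 0 < l ⬝ᵥ u) ∧ l ⬝ᵥ v = 0 ∧
      ∀ i, 0 ≤ ((L - U * A)ᵀ *ᵥ l) i) :
    (¬ ∃ (lbar : Fin k → ℝ) (Ubar : Matrix (Fin k) (Fin m) ℝ) (vbar : Fin k → ℝ),
      ((∀ u ∈ K, u ≠ 0 → 0 < lbar ⬝ᵥ u) ∧ lbar ⬝ᵥ vbar = 0 ∧
        ∀ i, 0 ≤ ((L - Ubar * A)ᵀ *ᵥ lbar) i) ∧
      ¬ ∃ (l : Fin k → ℝ) (U : Matrix (Fin k) (Fin m) ℝ) (v : Fin k → ℝ),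
        ((∀ u ∈ K, u ≠ 0 → 0 < l ⬝ᵥ u) ∧ l ⬝ᵥ v = 0 ∧
          ∀ i, 0 ≤ ((L - U * A)ᵀ *ᵥ l) i) ∧
        (U *ᵥ b + v) - (Ubar *ᵥ b + vbar) ∈ K ∧
        (U *ᵥ b + v) - (Ubar *ᵥ b + vbar) ≠ 0)
    ↔ ¬ ∃ x : Fin n → ℝ, (∀ i, 0 ≤ x i) ∧ A *ᵥ x = b := by
  obtain ⟨l₀, U₀, v₀, hl₀, hv₀, hU₀⟩ := hB
  obtain ⟨u₀, hu₀K, hu₀⟩ : ∃ u ∈ K, u ≠ 0 := by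
    have h0 : (0 : Fin k → ℝ) ∈ K := (hKpointed.ge rfl).1
    by_contra! h
    exact hKne (Set.eq_singleton_iff_unique_mem.mpr ⟨h0, h⟩)
  rw [not_iff_not]
  constructor
  · rintro ⟨l, U, v, ⟨hl, hv, hU⟩, hmax⟩
    by_contra h𝒜
    obtain ⟨y, hyA, hyb⟩ := (exists_nonneg_mulVec_eq_or_exists_vecMul_nonpos A b).resolve_left h𝒜
    have h := (IsDualFeasible.mk hl hv hU).add_vecMulVec (hl u₀ hu₀K hu₀).le hyA
    refine hmax ⟨l, U + vecMulVec u₀ y, v, ⟨h.pos, h.orth, h.nonneg⟩, ?_⟩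
    rw [add_vecMulVec_mulVec_add_sub]
    exact ⟨hKcone _ hyb.le _ hu₀K, smul_ne_zero hyb.ne' hu₀⟩
  · rintro ⟨x₀, hx₀, hAx₀⟩
    have hl₀ne : l₀ ≠ 0 := by rintro rfl; simpa using hl₀ u₀ hu₀K hu₀
    obtain ⟨x, Ubar, vbar, hx, hAx, h, hval⟩ :=
      (IsDualFeasible.mk hl₀ hv₀ hU₀).exists_eq_mulVec hl₀ne hx₀ hAx₀
    refine ⟨l₀, Ubar, vbar, ⟨h.pos, h.orth, h.nonneg⟩, ?_⟩
    rintro ⟨l, U, v, ⟨hl, hv, hU⟩, hK, hne⟩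
    rw [hval] at hK hne
    exact hne ((IsDualFeasible.mk hl hv hU).eq_zero_of_sub_mem hx hAx hK)

theorem stmt8 (k n m : ℕ) (K : Set (Fin k → ℝ))
    (hKcone : ∀ (c : ℝ), 0 ≤ c → ∀ x ∈ K, c • x ∈ K)
    (hKclosed : IsClosed K) (hKconvex : Convex ℝ K)
    (hKpointed : K ∩ (-K) = {0})
    (hKne : K ≠ {0}) (hKuniv : K ≠ Set.univ)
    (L : Matrix (Fin k) (Fin n) ℝ) (A : Matrix (Fin m) (Fin n) ℝ) (b : Fin m → ℝ)
    (hB : ∃ (l : Fin k → ℝ) (U : Matrix (Fin k) (Fin m) ℝ) (v : Fin k → ℝ),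
      (∀ u ∈ K, u ≠ 0 → 0 < l ⬝ᵥ u) ∧ l ⬝ᵥ v = 0 ∧
      ∀ i, 0 ≤ ((L - U * A)ᵀ *ᵥ l) i) :
    (¬ ∃ (lbar : Fin k → ℝ) (Ubar : Matrix (Fin k) (Fin m) ℝ) (vbar : Fin k → ℝ),
      ((∀ u ∈ K, u ≠ 0 → 0 < lbar ⬝ᵥ u) ∧ lbar ⬝ᵥ vbar = 0 ∧
        ∀ i, 0 ≤ ((L - Ubar * A)ᵀ *ᵥ lbar) i) ∧
      ¬ ∃ (l : Fin k → ℝ) (U : Matrix (Fin k) (Fin m) ℝ) (v : Fin k → ℝ),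
        ((∀ u ∈ K, u ≠ 0 → 0 < l ⬝ᵥ u) ∧ l ⬝ᵥ v = 0 ∧
          ∀ i, 0 ≤ ((L - U * A)ᵀ *ᵥ l) i) ∧
        (U *ᵥ b + v) - (Ubar *ᵥ b + vbar) ∈ K ∧
        (U *ᵥ b + v) - (Ubar *ᵥ b + vbar) ≠ 0)
    ↔ ¬ ∃ x : Fin n → ℝ, (∀ i, 0 ≤ x i) ∧ A *ᵥ x = b :=
  stmt8_general k n m K hKcone hKpointed hKne L A b hB
end
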